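/- arXiv:1002.4664 — 8 statements merged into one kernel-verified Lean document; each statement's English description precedes it below -/
import Mathlib

section
/- Suppose σ satisfies σ(B(x,r)) ≤ C₂·r^{n−αs} for all x ∈ ℝⁿ and r > 0, where C₂ > 0. Then there exists a constant C > 0, depending only on n, α, s and C₂, such that for all x ∈ ℝⁿ, all t > 0, and all y ∈ B(x,t), | ∫_t^∞ [ (σ(B(x,r))/r^{n−αs})^{1/(s−1)} − (σ(B(y,r))/r^{n−αs})^{1/(s−1)} ] dr/r | ≤ C. -/
open MeasureTheory Metric Set Filter
open scoped ENNReal NNReal Topology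

noncomputable section

/-- `n`-dimensional Euclidean space. -/
abbrev En (n : ℕ) : Type := EuclideanSpace ℝ (Fin n)

/-- The truncated Wolff potential
`W^ρ_{α,s} μ (x) = ∫_0^ρ (μ(B(x,r))/r^{n-αs})^{1/(s-1)} dr/r`. -/
noncomputable def wolffT (n : ℕ) (α s : ℝ) (μ : Measure (En n)) (ρ : ℝ) (x : En n) : ℝ≥0∞ :=
  ∫⁻ r in Set.Ioo (0:ℝ) ρ,
    (μ (Metric.ball x r) / ENNReal.ofReal (r ^ ((n:ℝ) - α * s))) ^ (1/(s-1))
      * ENNReal.ofReal r⁻¹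

/-- The (full) Wolff potential
`W_{α,s} μ (x) = ∫_0^∞ (μ(B(x,r))/r^{n-αs})^{1/(s-1)} dr/r`. -/
noncomputable def wolff (n : ℕ) (α s : ℝ) (μ : Measure (En n)) (x : En n) : ℝ≥0∞ :=
  ∫⁻ r in Set.Ioi (0:ℝ),
    (μ (Metric.ball x r) / ENNReal.ofReal (r ^ ((n:ℝ) - α * s))) ^ (1/(s-1))
      * ENNReal.ofReal r⁻¹

/-- The truncated Riesz-type potential
`I^ρ μ (x) = ∫_0^ρ (μ(B(x,r))/r^{n-αs}) dr/r`. -/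
noncomputable def rieszT (n : ℕ) (α s : ℝ) (μ : Measure (En n)) (ρ : ℝ) (x : En n) : ℝ≥0∞ :=
  ∫⁻ r in Set.Ioo (0:ℝ) ρ,
    (μ (Metric.ball x r) / ENNReal.ofReal (r ^ ((n:ℝ) - α * s))) * ENNReal.ofReal r⁻¹

/-- The nonlinear operator `𝒩 f (x) = W_{α,s}(f^{s-1} dσ)(x)`. -/
noncomputable def Nop (n : ℕ) (α s : ℝ) (σ : Measure (En n)) (f : En n → ℝ≥0∞) (x : En n) :
    ℝ≥0∞ :=
  ∫⁻ r in Set.Ioi (0:ℝ),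
    (ENNReal.ofReal (r ^ (α * s - (n:ℝ))) * ∫⁻ y in Metric.ball x r, (f y) ^ (s-1) ∂σ)
        ^ (1/(s-1))
      * ENNReal.ofReal r⁻¹

/-- The Riesz potential `I_α f (x) = (n-α)⁻¹ ∫ f(y) |x-y|^{α-n} dy`. -/
noncomputable def rieszPot (n : ℕ) (α : ℝ) (f : En n → ℝ≥0∞) (x : En n) : ℝ≥0∞ :=
  ENNReal.ofReal (((n:ℝ) - α)⁻¹) * ∫⁻ y, f y * ENNReal.ofReal (‖x - y‖ ^ (α - (n:ℝ)))

/-- The Riesz capacity `cap_{α,s}(A) = inf { ∫ f^s : f ≥ 0, I_α f ≥ 1 on A }`. -/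
noncomputable def rieszCap (n : ℕ) (α s : ℝ) (A : Set (En n)) : ℝ≥0∞ :=
  ⨅ (f : En n → ℝ≥0∞) (_ : Measurable f) (_ : ∀ x ∈ A, 1 ≤ rieszPot n α f x),
    ∫⁻ y, (f y) ^ s

/-- Extended exponential: `eexp x = exp x` for finite `x`, with `eexp ∞ = ∞`. -/
noncomputable def eexp (x : ℝ≥0∞) : ℝ≥0∞ :=
  if x = ∞ then ∞ else ENNReal.ofReal (Real.exp x.toReal)

/- Idea: with `ψ_z(r) = σ(B(z,r))^{1/(s-1)}`, the integrand is `(ψ_x(r) - ψ_y(r)) r^{-β}` with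
`β = (n-αs)/(s-1) + 1 > 1`. Since `B(x,r) ⊆ B(y,r+t)` and `B(y,r) ⊆ B(x,r+t)`, its absolute value
is at most the sum of the increments `ψ_z(r+t) - ψ_z(r)`, `z = x, y`. Writing
`r^{-β} = β ∫_r^∞ v^{-β-1} dv` and applying Tonelli, the weighted integral of such an increment
over `(t,∞)` becomes `β ∫_t^∞ v^{-β-1} ∫_t^v (ψ(r+t) - ψ(r)) dr dv`; the inner integral telescopes
to at most `t ψ(v+t) ≲ t v^{β-1}` by the growth bound, leaving `∫_t^∞ t v^{-2} dv = 1`. -/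

lemma lintegral_Ioi_ofReal_rpow {a c : ℝ} (ha : a < -1) (hc : 0 < c) :
    ∫⁻ x in Ioi c, ENNReal.ofReal (x ^ a) = ENNReal.ofReal (-c ^ (a + 1) / (a + 1)) := by
  rw [← integral_Ioi_rpow_of_lt ha hc,
    ofReal_integral_eq_lintegral_ofReal (integrableOn_Ioi_rpow_of_lt ha hc)]
  exact (ae_restrict_iff' measurableSet_Ioi).2
    (ae_of_all _ fun x hx => Real.rpow_nonneg (hc.trans hx).le _)

lemma ofReal_rpow_neg_eq_lintegral_Ioi {β r : ℝ} (hβ : 0 < β) (hr : 0 < r) :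
    ENNReal.ofReal (r ^ (-β)) = ∫⁻ v in Ioi r, ENNReal.ofReal (β * v ^ (-β - 1)) := by
  simp_rw [ENNReal.ofReal_mul hβ.le]
  rw [lintegral_const_mul' _ _ ENNReal.ofReal_ne_top, lintegral_Ioi_ofReal_rpow (by linarith) hr,
    ← ENNReal.ofReal_mul hβ.le, show -β - 1 + 1 = -β by ring]
  congr 1
  field_simp

lemma setLIntegral_Ioi_mul_rpow_neg {f : ℝ → ℝ≥0∞} (hf : Measurable f) {β t : ℝ} (hβ : 0 < β)
    (ht : 0 ≤ t) :
    ∫⁻ r in Ioi t, f r * ENNReal.ofReal (r ^ (-β))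
      = ∫⁻ v in Ioi t, ENNReal.ofReal (β * v ^ (-β - 1)) * ∫⁻ r in Ioo t v, f r := by
  set w : ℝ → ℝ≥0∞ := fun v => ENNReal.ofReal (β * v ^ (-β - 1))
  set g : ℝ × ℝ → ℝ≥0∞ := {p | p.1 < p.2}.indicator fun p => f p.1 * w p.2
  have hg : Measurable g := ((hf.comp measurable_fst).mul (by fun_prop)).indicator
    (measurableSet_lt measurable_fst measurable_snd)
  calc ∫⁻ r in Ioi t, f r * ENNReal.ofReal (r ^ (-β))
      = ∫⁻ r in Ioi t, ∫⁻ v in Ioi t, g (r, v) := by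
        refine setLIntegral_congr_fun measurableSet_Ioi fun r (hr : t < r) => ?_
        have : (fun v => g (r, v)) = (Ioi r).indicator fun v => f r * w v := by
          ext v; simp [g, indicator_apply]
        rw [this, lintegral_indicator measurableSet_Ioi,
          Measure.restrict_restrict measurableSet_Ioi, Ioi_inter_Ioi, sup_eq_left.2 hr.le, lintegral_const_mul _ (by fun_prop),
          ofReal_rpow_neg_eq_lintegral_Ioi hβ (ht.trans_lt hr)]
    _ = ∫⁻ v in Ioi t, ∫⁻ r in Ioi t, g (r, v) :=
        lintegral_lintegral_swap hg.aemeasurable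
    _ = ∫⁻ v in Ioi t, w v * ∫⁻ r in Ioo t v, f r := by
        refine setLIntegral_congr_fun measurableSet_Ioi fun v _ => ?_
        have : (fun r => g (r, v)) = (Iio v).indicator fun r => f r * w v := by
          ext r; simp [g, indicator_apply]
        rw [this, lintegral_indicator measurableSet_Iio,
          Measure.restrict_restrict measurableSet_Iio, Iio_inter_Ioi, lintegral_mul_const _ hf, mul_comm]

section MonotoneShift

variable {ψ : ℝ → ℝ} {t : ℝ}

lemma intervalIntegral_sub_shift_le (hψ : Monotone ψ) (ht : 0 ≤ t) (h0 : 0 ≤ ψ t) (v : ℝ) :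
    ∫ r in t..v, (ψ (r + t) - ψ r) ≤ t * ψ (v + t) := by
  have hi : ∀ a b, IntervalIntegrable ψ volume a b := fun _ _ => hψ.intervalIntegrable
  have hshift : IntervalIntegrable (fun r => ψ (r + t)) volume t v :=
    (hψ.comp (monotone_id.add_const t)).intervalIntegrable
  -- both integrals are pieces of `∫_t^{v+t} ψ`, so the difference telescopes
  have hsplit : (∫ r in t..v + t, ψ r) = (∫ r in t..t + t, ψ r) + ∫ r in t + t..v + t, ψ r :=
    (intervalIntegral.integral_add_adjacent_intervals (hi _ _) (hi _ _)).symm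
  have hsplit' : (∫ r in t..v + t, ψ r) = (∫ r in t..v, ψ r) + ∫ r in v..v + t, ψ r :=
    (intervalIntegral.integral_add_adjacent_intervals (hi _ _) (hi _ _)).symm
  have hlast : ∫ r in v..v + t, ψ r ≤ t * ψ (v + t) := by
    simpa using intervalIntegral.integral_mono_on (show v ≤ v + t by linarith) (hi _ _)
      intervalIntegrable_const fun r hr => hψ hr.2
  have hfirst : 0 ≤ ∫ r in t..t + t, ψ r :=
    intervalIntegral.integral_nonneg (by linarith) fun r hr => h0.trans (hψ hr.1)
  rw [intervalIntegral.integral_sub hshift (hi _ _), intervalIntegral.integral_comp_add_right ψ t]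
  linarith

lemma setLIntegral_Ioi_sub_shift_mul_rpow_neg_le (hψ : Monotone ψ) {β M : ℝ} (hβ : 1 < β)
    (ht : 0 < t) (hM : 0 ≤ M) (h0 : 0 ≤ ψ t) (hgrow : ∀ r, 0 < r → ψ r ≤ M * r ^ (β - 1)) :
    ∫⁻ r in Ioi t, ENNReal.ofReal (ψ (r + t) - ψ r) * ENNReal.ofReal (r ^ (-β))
      ≤ ENNReal.ofReal (2 ^ (β - 1) * β * M) := by
  have hshift : Monotone fun r => ψ (r + t) := hψ.comp (monotone_id.add_const t)
  have hinner : ∀ v ∈ Ioi t, ∫⁻ r in Ioo t v, ENNReal.ofReal (ψ (r + t) - ψ r)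
      ≤ ENNReal.ofReal (2 ^ (β - 1) * M * t * v ^ (β - 1)) := by
    intro v (hv : t < v)
    have hint : IntegrableOn (fun r => ψ (r + t) - ψ r) (Ioo t v) :=
      (intervalIntegrable_iff_integrableOn_Ioo_of_le hv.le).1
        (hshift.intervalIntegrable.sub hψ.intervalIntegrable)
    have hnonneg : 0 ≤ᵐ[volume.restrict (Ioo t v)] fun r => ψ (r + t) - ψ r :=
      ae_of_all _ fun r => sub_nonneg.2 (hψ (by linarith))
    rw [← ofReal_integral_eq_lintegral_ofReal hint hnonneg, ← integral_Ioc_eq_integral_Ioo,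
      ← intervalIntegral.integral_of_le hv.le]
    refine ENNReal.ofReal_le_ofReal ((intervalIntegral_sub_shift_le hψ ht.le h0 v).trans ?_)
    calc t * ψ (v + t) ≤ t * (M * (v + t) ^ (β - 1)) :=
          mul_le_mul_of_nonneg_left (hgrow _ (by linarith)) ht.le
      _ ≤ t * (M * (2 * v) ^ (β - 1)) := by gcongr <;> linarith
      _ = 2 ^ (β - 1) * M * t * v ^ (β - 1) := by
          rw [Real.mul_rpow (by norm_num) (by linarith)]; ring
  calc ∫⁻ r in Ioi t, ENNReal.ofReal (ψ (r + t) - ψ r) * ENNReal.ofReal (r ^ (-β))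
      = ∫⁻ v in Ioi t, ENNReal.ofReal (β * v ^ (-β - 1))
          * ∫⁻ r in Ioo t v, ENNReal.ofReal (ψ (r + t) - ψ r) :=
        setLIntegral_Ioi_mul_rpow_neg (hshift.measurable.sub hψ.measurable).ennreal_ofReal
          (by linarith) ht.le
    _ ≤ ∫⁻ v in Ioi t, ENNReal.ofReal (β * v ^ (-β - 1))
          * ENNReal.ofReal (2 ^ (β - 1) * M * t * v ^ (β - 1)) :=
        setLIntegral_mono' measurableSet_Ioi fun v hv => by gcongr; exact hinner v hv
    _ = ∫⁻ v in Ioi t,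
          ENNReal.ofReal (2 ^ (β - 1) * β * M * t) * ENNReal.ofReal (v ^ (-2 : ℝ)) := by
        refine setLIntegral_congr_fun measurableSet_Ioi fun v (hv : t < v) => ?_
        have hv0 : 0 < v := ht.trans hv
        rw [← ENNReal.ofReal_mul (by positivity), ← ENNReal.ofReal_mul (by positivity)]
        congr 1
        have : v ^ (-β - 1) * v ^ (β - 1) = v ^ (-2 : ℝ) := by
          rw [← Real.rpow_add hv0]; ring_nf
        linear_combination (2 ^ (β - 1) * β * M * t) * this
    _ = ENNReal.ofReal (2 ^ (β - 1) * β * M) := by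
        rw [lintegral_const_mul' _ _ ENNReal.ofReal_ne_top,
          lintegral_Ioi_ofReal_rpow (by norm_num) ht, ← ENNReal.ofReal_mul (by positivity),
          show (-2 : ℝ) + 1 = -1 by norm_num, Real.rpow_neg_one]
        congr 1
        field_simp

end MonotoneShift

section Balls

variable {X : Type*} [PseudoMetricSpace X] [MeasurableSpace X]

def measureBallRpow (μ : Measure X) (γ : ℝ) (z : X) (r : ℝ) : ℝ := (μ (ball z r)).toReal ^ γ

variable {μ : Measure X} {γ : ℝ} {x y : X}

lemma measureBallRpow_nonneg (z : X) (r : ℝ) : 0 ≤ measureBallRpow μ γ z r :=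
  Real.rpow_nonneg ENNReal.toReal_nonneg _

lemma measureBallRpow_le_of_add_dist_le (hγ : 0 ≤ γ) {r r' : ℝ} (hfin : μ (ball y r') ≠ ∞)
    (h : r + dist x y ≤ r') : measureBallRpow μ γ x r ≤ measureBallRpow μ γ y r' :=
  Real.rpow_le_rpow ENNReal.toReal_nonneg
    (ENNReal.toReal_mono hfin (measure_mono (ball_subset_ball' h))) hγ

lemma monotone_measureBallRpow (hfin : ∀ r, μ (ball x r) ≠ ∞) (hγ : 0 ≤ γ) :
    Monotone (measureBallRpow μ γ x) := fun r r' h =>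
  measureBallRpow_le_of_add_dist_le hγ (hfin r') (by simpa using h)

lemma abs_measureBallRpow_sub_le (hfin : ∀ z r, μ (ball z r) ≠ ∞) (hγ : 0 ≤ γ) {t : ℝ}
    (hxy : dist x y ≤ t) (r : ℝ) :
    |measureBallRpow μ γ x r - measureBallRpow μ γ y r|
      ≤ (measureBallRpow μ γ x (r + t) - measureBallRpow μ γ x r)
        + (measureBallRpow μ γ y (r + t) - measureBallRpow μ γ y r) := by
  have hxy' : measureBallRpow μ γ x r ≤ measureBallRpow μ γ y (r + t) :=
    measureBallRpow_le_of_add_dist_le hγ (hfin _ _) (by linarith)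
  have hyx : measureBallRpow μ γ y r ≤ measureBallRpow μ γ x (r + t) :=
    measureBallRpow_le_of_add_dist_le hγ (hfin _ _) (by rw [dist_comm]; linarith)
  have hrt : r ≤ r + t := le_add_of_nonneg_right (dist_nonneg.trans hxy)
  have hx := monotone_measureBallRpow (hfin x) hγ hrt
  have hy := monotone_measureBallRpow (hfin y) hγ hrt
  rw [abs_sub_le_iff]
  constructor <;> linarith

lemma measureBallRpow_le_of_measure_ball_le (hγ : 0 ≤ γ) {C κ r : ℝ} (hC : 0 ≤ C) (hr : 0 < r)
    (h : μ (ball x r) ≤ ENNReal.ofReal (C * r ^ κ)) :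
    measureBallRpow μ γ x r ≤ C ^ γ * r ^ (κ * γ) := by
  rw [Real.rpow_mul hr.le, ← Real.mul_rpow hC (by positivity)]
  exact Real.rpow_le_rpow ENNReal.toReal_nonneg
    (ENNReal.toReal_le_of_le_ofReal (by positivity) h) hγ

lemma div_rpow_measure_ball_div_eq {κ r : ℝ} (hr : 0 < r) (z : X) :
    ((μ (ball z r)).toReal / r ^ κ) ^ γ / r = measureBallRpow μ γ z r * r ^ (-(κ * γ + 1)) := by
  rw [Real.div_rpow ENNReal.toReal_nonneg (by positivity), ← Real.rpow_mul hr.le, div_div,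
    Real.rpow_neg hr.le, Real.rpow_add_one hr.ne', measureBallRpow, div_eq_mul_inv]

lemma ofReal_abs_div_rpow_measure_ball_sub_le (hfin : ∀ z r, μ (ball z r) ≠ ∞) (hγ : 0 ≤ γ)
    {t : ℝ} (hxy : dist x y ≤ t) (κ : ℝ) {r : ℝ} (hr : 0 < r) :
    ENNReal.ofReal |(((μ (ball x r)).toReal / r ^ κ) ^ γ - ((μ (ball y r)).toReal / r ^ κ) ^ γ) / r|
      ≤ ENNReal.ofReal (measureBallRpow μ γ x (r + t) - measureBallRpow μ γ x r)
          * ENNReal.ofReal (r ^ (-(κ * γ + 1)))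
        + ENNReal.ofReal (measureBallRpow μ γ y (r + t) - measureBallRpow μ γ y r)
          * ENNReal.ofReal (r ^ (-(κ * γ + 1))) := by
  have hw : 0 ≤ r ^ (-(κ * γ + 1)) := by positivity
  rw [sub_div, div_rpow_measure_ball_div_eq hr, div_rpow_measure_ball_div_eq hr, ← sub_mul,
    abs_mul, abs_of_nonneg hw, ← ENNReal.ofReal_mul' hw, ← ENNReal.ofReal_mul' hw]
  refine (ENNReal.ofReal_le_ofReal ?_).trans ENNReal.ofReal_add_le
  rw [← add_mul]
  exact mul_le_mul_of_nonneg_right (abs_measureBallRpow_sub_le hfin hγ hxy r) hw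

lemma setLIntegral_Ioi_ofReal_norm_div_rpow_measure_ball_sub_le
    (hfin : ∀ z r, μ (ball z r) ≠ ∞) (hγ : 0 ≤ γ) {t : ℝ} (hxy : dist x y ≤ t) (κ : ℝ) :
    ∫⁻ r in Ioi t, ENNReal.ofReal
        ‖(((μ (ball x r)).toReal / r ^ κ) ^ γ - ((μ (ball y r)).toReal / r ^ κ) ^ γ) / r‖
      ≤ (∫⁻ r in Ioi t, ENNReal.ofReal (measureBallRpow μ γ x (r + t) - measureBallRpow μ γ x r)
          * ENNReal.ofReal (r ^ (-(κ * γ + 1))))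
        + ∫⁻ r in Ioi t, ENNReal.ofReal (measureBallRpow μ γ y (r + t) - measureBallRpow μ γ y r)
          * ENNReal.ofReal (r ^ (-(κ * γ + 1))) := by
  have hmeas := (monotone_measureBallRpow (hfin x) hγ).measurable
  rw [← lintegral_add_left (by fun_prop)]
  refine setLIntegral_mono' measurableSet_Ioi fun r (hr : t < r) => ?_
  rw [Real.norm_eq_abs]
  exact ofReal_abs_div_rpow_measure_ball_sub_le hfin hγ hxy κ
    ((dist_nonneg.trans hxy).trans_lt hr)

end Balls

theorem statement4_general (n : ℕ) (α s : ℝ) (hs : 1 < s)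
    (hαs : α * s < n) (C₂ : ℝ) (hC₂ : 0 < C₂) :
    ∃ C : ℝ, 0 < C ∧
      ∀ σ : Measure (En n), IsLocallyFiniteMeasure σ →
        (∀ (z : En n) (r : ℝ), 0 < r →
          σ (Metric.ball z r) ≤ ENNReal.ofReal (C₂ * r ^ ((n:ℝ) - α * s))) →
        ∀ (x y : En n) (t : ℝ), 0 < t → y ∈ Metric.ball x t →
          |∫ r in Set.Ioi t,
              (((σ (Metric.ball x r)).toReal / r ^ ((n:ℝ) - α * s)) ^ (1/(s-1))
                - ((σ (Metric.ball y r)).toReal / r ^ ((n:ℝ) - α * s)) ^ (1/(s-1))) / r|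
            ≤ C := by
  set γ : ℝ := 1 / (s - 1)
  set κ : ℝ := (n : ℝ) - α * s
  set β : ℝ := κ * γ + 1
  have hγ : 0 < γ := one_div_pos.2 (sub_pos.2 hs)
  have hβ : 1 < β := lt_add_of_pos_left 1 (mul_pos (sub_pos.2 hαs) hγ)
  set K : ℝ := 2 ^ (β - 1) * β * C₂ ^ γ
  refine ⟨2 * K, by positivity, fun σ _ hgrow x y t ht hy => ?_⟩
  have hfin : ∀ z r, σ (ball z r) ≠ ∞ := fun z r => measure_ball_lt_top.ne
  have hxy : dist x y ≤ t := by rw [dist_comm]; exact (mem_ball.1 hy).le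
  have htail : ∀ z, ∫⁻ r in Ioi t, ENNReal.ofReal (measureBallRpow σ γ z (r + t)
      - measureBallRpow σ γ z r) * ENNReal.ofReal (r ^ (-β)) ≤ ENNReal.ofReal K :=
    fun z => setLIntegral_Ioi_sub_shift_mul_rpow_neg_le (monotone_measureBallRpow (hfin z) hγ.le)
      hβ ht (by positivity) (measureBallRpow_nonneg _ _) fun r hr => by
        simpa [β] using measureBallRpow_le_of_measure_ball_le hγ.le hC₂.le hr (hgrow z r hr)
  rw [← Real.norm_eq_abs]
  refine (norm_integral_le_lintegral_norm _).trans
    (ENNReal.toReal_le_of_le_ofReal (by positivity) ?_)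
  refine (setLIntegral_Ioi_ofReal_norm_div_rpow_measure_ball_sub_le hfin hγ.le hxy κ).trans ?_
  rw [two_mul, ENNReal.ofReal_add (by positivity) (by positivity)]
  exact add_le_add (htail x) (htail y)

/-- if `σ(B(x,r)) ≤ C₂ r^{n-αs}` for all balls, then the tail of the Wolff
potential is nearly constant: there is `C = C(n,α,s,C₂) > 0` with
`|∫_t^∞ [(σ(B(x,r))/r^{n-αs})^{1/(s-1)} - (σ(B(y,r))/r^{n-αs})^{1/(s-1)}] dr/r| ≤ C`
for every `x`, `t > 0` and `y ∈ B(x,t)`. -/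
theorem statement4 (n : ℕ) (hn : 2 ≤ n) (α s : ℝ) (hs : 1 < s) (hα : 0 < α)
    (hαs : α * s < n) (C₂ : ℝ) (hC₂ : 0 < C₂) :
    ∃ C : ℝ, 0 < C ∧
      ∀ σ : Measure (En n), IsLocallyFiniteMeasure σ →
        (∀ (z : En n) (r : ℝ), 0 < r →
          σ (Metric.ball z r) ≤ ENNReal.ofReal (C₂ * r ^ ((n:ℝ) - α * s))) →
        ∀ (x y : En n) (t : ℝ), 0 < t → y ∈ Metric.ball x t →
          |∫ r in Set.Ioi t,
              (((σ (Metric.ball x r)).toReal / r ^ ((n:ℝ) - α * s)) ^ (1/(s-1))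
                - ((σ (Metric.ball y r)).toReal / r ^ ((n:ℝ) - α * s)) ^ (1/(s-1))) / r|
            ≤ C :=
  statement4_general n α s hs hαs C₂ hC₂
end
end

section
/- Suppose 1 < s ≤ 2. Let x₀ ∈ ℝⁿ, C₀ > 0, and let u : ℝⁿ → [0,∞] be a Borel measurable function satisfying u(x) ≥ C₀·𝒩u(x) + C₀·|x−x₀|^{(αs−n)/(s−1)} for all x ∈ ℝⁿ. Then there exists a constant C > 0, depending only on n, s, α and C₀, such that for all x ∈ ℝⁿ, u(x) ≥ Σ_{j=1}^∞ C^j · 𝒩^j(f)(x) + C·|x−x₀|^{(αs−n)/(s−1)}, where f(y) = |y−x₀|^{(αs−n)/(s−1)}. -/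
open MeasureTheory Metric Set Filter
open scoped ENNReal NNReal Topology

noncomputable section

/-! For `1 < s ≤ 2` the exponent `p = s - 1` lies in `(0, 1]`, where the reverse Minkowski
inequality `‖f‖_p + ‖g‖_p ≤ ‖f + g‖_p` holds; hence `𝒩` is monotone, superadditive and positively
homogeneous. Feeding the supersolution inequality `u ≥ C₀ 𝒩u + C₀ f` into itself then gives
`u ≥ ∑_{j ≥ 0} C₀^{j+1} 𝒩^j f`, and `C = min(C₀, C₀²)` satisfies `C^j ≤ C₀^{j+1}` for `j ≥ 1`. -/

namespace ENNReal

theorem mul_div_rpow_eq_rpow_mul_rpow {p : ℝ} (hp : 0 ≤ p) {w : ℝ≥0∞} (hw₀ : w ≠ 0)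
    (hw : w ≠ ∞) (a : ℝ≥0∞) : w * (a / w) ^ p = w ^ (1 - p) * a ^ p := by
  rw [div_rpow_of_nonneg _ _ hp, rpow_sub _ _ hw₀ hw, rpow_one, div_eq_mul_inv,
    div_eq_mul_inv]
  ring

/-- Hölder's inequality for two terms with exponents `1 / (1 - p)` and `1 / p`. -/
theorem rpow_mul_rpow_add_rpow_mul_rpow_le {p : ℝ} (hp₀ : 0 < p) (hp₁ : p ≤ 1) {v w : ℝ≥0∞}
    (hv₀ : v ≠ 0) (hv : v ≠ ∞) (hw₀ : w ≠ 0) (hw : w ≠ ∞) (a b : ℝ≥0∞) :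
    v ^ (1 - p) * a ^ p + w ^ (1 - p) * b ^ p ≤ (v + w) ^ (1 - p) * (a + b) ^ p := by
  have cancel : ∀ {w : ℝ≥0∞}, w ≠ 0 → w ≠ ∞ → ∀ c, w * ((c / w) ^ p) ^ p⁻¹ = c :=
    fun hw₀ hw c => by
      rw [← rpow_mul, mul_inv_cancel₀ hp₀.ne', rpow_one, ENNReal.mul_div_cancel hw₀ hw]
  have := inner_le_weight_mul_Lp_of_nonneg Finset.univ ((one_le_inv₀ hp₀).2 hp₁) ![v, w]
    ![(a / v) ^ p, (b / w) ^ p]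
  simpa only [Fin.sum_univ_two, Matrix.cons_val_zero, Matrix.cons_val_one, inv_inv,
    cancel hv₀ hv, cancel hw₀ hw, mul_div_rpow_eq_rpow_mul_rpow hp₀.le hv₀ hv,
    mul_div_rpow_eq_rpow_mul_rpow hp₀.le hw₀ hw] using this

theorem lintegral_Lp_add_lintegral_Lp_le {α : Type*} [MeasurableSpace α] (μ : Measure α)
    {p : ℝ} (hp₀ : 0 < p) (hp₁ : p ≤ 1) (f g : α → ℝ≥0∞) :
    (∫⁻ a, f a ^ p ∂μ) ^ (1 / p) + (∫⁻ a, g a ^ p ∂μ) ^ (1 / p)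
      ≤ (∫⁻ a, (f a + g a) ^ p ∂μ) ^ (1 / p) := by
  set A := ∫⁻ a, f a ^ p ∂μ
  set B := ∫⁻ a, g a ^ p ∂μ
  set R := ∫⁻ a, (f a + g a) ^ p ∂μ
  have hp' : 0 < 1 / p := one_div_pos.2 hp₀
  have hAR : A ≤ R := lintegral_mono fun a => rpow_le_rpow le_self_add hp₀.le
  have hBR : B ≤ R := lintegral_mono fun a => rpow_le_rpow le_add_self hp₀.le
  rcases eq_or_ne A 0 with hA₀ | hA₀
  · simpa [hA₀, hp₀] using rpow_le_rpow hBR hp'.le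
  rcases eq_or_ne B 0 with hB₀ | hB₀
  · simpa [hB₀, hp₀] using rpow_le_rpow hAR hp'.le
  by_cases hAB : A = ∞ ∨ B = ∞
  · have hR : R = ∞ := by rcases hAB with h | h <;> simp_all [top_le_iff]
    simp [hR, hp₀]
  push Not at hAB
  obtain ⟨hA, hB⟩ := hAB
  set v := A ^ (1 / p)
  set w := B ^ (1 / p)
  have hv₀ : v ≠ 0 := by simp [v, hA₀, hA]
  have hv : v ≠ ∞ := by simp [v, hA₀, hA, hp₀]
  have hw₀ : w ≠ 0 := by simp [w, hB₀, hB]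
  have hw : w ≠ ∞ := by simp [w, hB₀, hB, hp₀]
  have hvw₀ : v + w ≠ 0 := by simp [hv₀]
  have hvw : v + w ≠ ∞ := add_ne_top.2 ⟨hv, hw⟩
  have hpow : ∀ c : ℝ≥0∞, c ^ (1 - p) * c ^ p = c := fun c => by
    rw [← rpow_add_of_nonneg _ _ (sub_nonneg.2 hp₁) hp₀.le, sub_add_cancel, rpow_one]
  have hvA : A = v ^ p := by rw [← rpow_mul, one_div_mul_cancel hp₀.ne', rpow_one]
  have hwB : B = w ^ p := by rw [← rpow_mul, one_div_mul_cancel hp₀.ne', rpow_one]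
  have integrated : v + w ≤ (v + w) ^ (1 - p) * R := calc
    v + w = v ^ (1 - p) * A + w ^ (1 - p) * B := by rw [hvA, hwB, hpow, hpow]
    _ ≤ ∫⁻ a, v ^ (1 - p) * f a ^ p + w ^ (1 - p) * g a ^ p ∂μ := by
      rw [← lintegral_const_mul' _ _ (rpow_ne_top_of_nonneg (sub_nonneg.2 hp₁) hv),
        ← lintegral_const_mul' _ _ (rpow_ne_top_of_nonneg (sub_nonneg.2 hp₁) hw)]
      exact le_lintegral_add _ _
    _ ≤ ∫⁻ a, (v + w) ^ (1 - p) * (f a + g a) ^ p ∂μ :=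
      lintegral_mono fun a => rpow_mul_rpow_add_rpow_mul_rpow_le hp₀ hp₁ hv₀ hv hw₀ hw _ _
    _ = (v + w) ^ (1 - p) * R :=
      lintegral_const_mul' _ _ (rpow_ne_top_of_nonneg (sub_nonneg.2 hp₁) hvw)
  rw [one_div, le_rpow_inv_iff hp₀]
  exact (ENNReal.mul_le_mul_iff_right (by simp [hvw₀, hvw])
    (rpow_ne_top_of_nonneg (sub_nonneg.2 hp₁) hvw)).1 ((hpow _).trans_le integrated)

end ENNReal

section Iteration

variable {X : Type*} {N : (X → ℝ≥0∞) → X → ℝ≥0∞}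

theorem sum_le_map_sum_of_superadditive (hN : ∀ f g, N f + N g ≤ N (f + g)) {ι : Type*}
    (s : Finset ι) (h : ι → X → ℝ≥0∞) : ∑ i ∈ s, N (h i) ≤ N (∑ i ∈ s, h i) := by
  classical
  induction s using Finset.induction_on with
  | empty => exact bot_le
  | insert i s hi ih =>
    rw [Finset.sum_insert hi, Finset.sum_insert hi]
    exact (add_le_add_right ih _).trans (hN _ _)

theorem tsum_pow_mul_iterate_le_of_supersolution (hN_mono : Monotone N)
    (hN_add : ∀ f g, N f + N g ≤ N (f + g))
    (hN_smul : ∀ a : ℝ≥0∞, a ≠ ∞ → ∀ f, N (a • f) = a • N f) {c : ℝ≥0∞} (hc : c ≠ ∞)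
    {f u : X → ℝ≥0∞} (hu : c • N u + c • f ≤ u) (x : X) :
    ∑' j, c ^ (j + 1) * N^[j] f x ≤ u x := by
  have partial_sum_le : ∀ m, ∑ j ∈ Finset.range m, c ^ (j + 1) • N^[j] f ≤ u := by
    intro m
    induction m with
    | zero => exact bot_le
    | succ m ih => calc
        ∑ j ∈ Finset.range (m + 1), c ^ (j + 1) • N^[j] f
            = c • ∑ j ∈ Finset.range m, N (c ^ (j + 1) • N^[j] f) + c • f := by
          simp only [Finset.sum_range_succ', Function.iterate_succ_apply',
            hN_smul _ (ENNReal.pow_ne_top hc), Finset.smul_sum, smul_smul, ← pow_succ', zero_add,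
            pow_one, Function.iterate_zero, id]
        _ ≤ c • N u + c • f := by
          gcongr
          exact (sum_le_map_sum_of_superadditive hN_add _ _).trans (hN_mono ih)
        _ ≤ u := hu
  rw [ENNReal.tsum_eq_iSup_nat]
  exact iSup_le fun m => by simpa using partial_sum_le m x

end Iteration

section Nop

variable {n : ℕ} {α s : ℝ} (σ : Measure (En n))

theorem nop_monotone (hs : 1 ≤ s) : Monotone (Nop n α s σ) := by
  intro f g hfg x
  unfold Nop
  gcongr with r y
  exact hfg y

theorem nop_superadditive (hs : 1 < s) (hs₂ : s ≤ 2) (f g : En n → ℝ≥0∞) :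
    Nop n α s σ f + Nop n α s σ g ≤ Nop n α s σ (f + g) := by
  intro x
  have hq : 0 ≤ 1 / (s - 1) := one_div_nonneg.2 (by linarith)
  refine (le_lintegral_add _ _).trans (lintegral_mono fun r => ?_)
  rw [← add_mul]
  gcongr
  simp only [ENNReal.mul_rpow_of_nonneg _ _ hq, ← mul_add, Pi.add_apply]
  gcongr
  exact ENNReal.lintegral_Lp_add_lintegral_Lp_le _ (by linarith) (by linarith) f g

theorem nop_smul (hs : 1 < s) {a : ℝ≥0∞} (ha : a ≠ ∞) (f : En n → ℝ≥0∞) :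
    Nop n α s σ (a • f) = a • Nop n α s σ f := by
  have hp : 0 < s - 1 := by linarith
  ext x
  simp only [Nop, Pi.smul_apply, smul_eq_mul]
  rw [← lintegral_const_mul' a _ ha]
  refine lintegral_congr fun r => ?_
  have hpull : ∫⁻ y in Metric.ball x r, (a * f y) ^ (s - 1) ∂σ
      = a ^ (s - 1) * ∫⁻ y in Metric.ball x r, f y ^ (s - 1) ∂σ := by
    rw [← lintegral_const_mul' _ _ (ENNReal.rpow_ne_top_of_nonneg hp.le ha)]
    exact lintegral_congr fun y => ENNReal.mul_rpow_of_nonneg _ _ hp.le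
  rw [hpull, mul_left_comm, ENNReal.mul_rpow_of_nonneg _ _ (one_div_nonneg.2 hp.le),
    ← ENNReal.rpow_mul, mul_one_div_cancel hp.ne', ENNReal.rpow_one, mul_assoc]

end Nop

theorem statement6_general (n : ℕ) (α s C₀ : ℝ) (hs : 1 < s) (hs2 : s ≤ 2)
    (hC₀ : 0 < C₀) :
    ∃ C : ℝ, 0 < C ∧
      ∀ σ : Measure (En n), IsLocallyFiniteMeasure σ →
        ∀ (x₀ : En n) (u : En n → ℝ≥0∞), Measurable u →
          (∀ x : En n,
            ENNReal.ofReal C₀ * Nop n α s σ u x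
              + ENNReal.ofReal C₀ * (ENNReal.ofReal ‖x - x₀‖) ^ ((α*s-(n:ℝ))/(s-1)) ≤ u x) →
          ∀ x : En n,
            (∑' j : ℕ, ENNReal.ofReal C ^ (j+1)
                * ((Nop n α s σ)^[j+1]
                    (fun y => (ENNReal.ofReal ‖y - x₀‖) ^ ((α*s-(n:ℝ))/(s-1))) x))
              + ENNReal.ofReal C * (ENNReal.ofReal ‖x - x₀‖) ^ ((α*s-(n:ℝ))/(s-1))
              ≤ u x := by
  refine ⟨min C₀ (C₀ * C₀), lt_min hC₀ (mul_pos hC₀ hC₀), fun σ _ x₀ u _ hu x => ?_⟩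
  set c₀ := ENNReal.ofReal C₀
  set c := ENNReal.ofReal (min C₀ (C₀ * C₀))
  set f₀ : En n → ℝ≥0∞ := fun y => ENNReal.ofReal ‖y - x₀‖ ^ ((α * s - n) / (s - 1))
  have hc : c ≤ c₀ := ENNReal.ofReal_le_ofReal (min_le_left _ _)
  have hc_pow (j : ℕ) : c ^ (j + 1) ≤ c₀ ^ (j + 2) := calc
    c ^ (j + 1) = c * c ^ j := pow_succ' c j
    _ ≤ c₀ ^ 2 * c₀ ^ j := by
      gcongr
      rw [sq, ← ENNReal.ofReal_mul hC₀.le]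
      exact ENNReal.ofReal_le_ofReal (min_le_right _ _)
    _ = c₀ ^ (j + 2) := by ring
  calc ∑' j, c ^ (j + 1) * (Nop n α s σ)^[j + 1] f₀ x + c * f₀ x
      ≤ ∑' j, c₀ ^ (j + 2) * (Nop n α s σ)^[j + 1] f₀ x + c₀ * f₀ x := by
        refine add_le_add (ENNReal.tsum_le_tsum fun j => ?_) (by gcongr)
        gcongr ?_ * _
        exact hc_pow j
    _ = ∑' j, c₀ ^ (j + 1) * (Nop n α s σ)^[j] f₀ x := by
        rw [tsum_eq_zero_add' (f := fun j => c₀ ^ (j + 1) * (Nop n α s σ)^[j] f₀ x)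
          ENNReal.summable, add_comm]
        simp only [zero_add, pow_one, Function.iterate_zero, id_eq]
    _ ≤ u x := tsum_pow_mul_iterate_le_of_supersolution (nop_monotone σ hs.le)
        (nop_superadditive σ hs hs2) (fun _ ha => nop_smul σ hs ha) ENNReal.ofReal_ne_top hu x

/-- Lemma `lowbdsum`, case `1 < s ≤ 2`: if
`u ≥ C₀ 𝒩 u + C₀ |x-x₀|^{(αs-n)/(s-1)}` pointwise, then there is `C = C(n,s,α,C₀) > 0` with
`u ≥ Σ_{j=1}^∞ C^j 𝒩^j(f) + C |x-x₀|^{(αs-n)/(s-1)}`, where `f(y) = |y-x₀|^{(αs-n)/(s-1)}`. -/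
theorem statement6 (n : ℕ) (hn : 2 ≤ n) (α s C₀ : ℝ) (hs : 1 < s) (hs2 : s ≤ 2) (hα : 0 < α)
    (hαs : α * s < n) (hC₀ : 0 < C₀) :
    ∃ C : ℝ, 0 < C ∧
      ∀ σ : Measure (En n), IsLocallyFiniteMeasure σ →
        ∀ (x₀ : En n) (u : En n → ℝ≥0∞), Measurable u →
          (∀ x : En n,
            ENNReal.ofReal C₀ * Nop n α s σ u x
              + ENNReal.ofReal C₀ * (ENNReal.ofReal ‖x - x₀‖) ^ ((α*s-(n:ℝ))/(s-1)) ≤ u x) →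
          ∀ x : En n,
            (∑' j : ℕ, ENNReal.ofReal C ^ (j+1)
                * ((Nop n α s σ)^[j+1]
                    (fun y => (ENNReal.ofReal ‖y - x₀‖) ^ ((α*s-(n:ℝ))/(s-1))) x))
              + ENNReal.ofReal C * (ENNReal.ofReal ‖x - x₀‖) ^ ((α*s-(n:ℝ))/(s-1))
              ≤ u x :=
  statement6_general n α s C₀ hs hs2 hC₀
end
end

section
/- Let x₀ ∈ ℝⁿ and let f(y) = |y−x₀|^{(αs−n)/(s−1)}. For x ∈ ℝⁿ with x ≠ x₀, let j_x be the unique integer with 2^{j_x} ≤ |x−x₀| < 2^{j_x+1}, and set B_k = B(x₀, 2^k). Then for every integer m ≥ 1 and every x ≠ x₀, 𝒩^m(f)(x) ≥ ( ((s−1)/(n−αs)) · 8^{(αs−n)/(s−1)} )^m · |x−x₀|^{(αs−n)/(s−1)} · ( (1/m!) · ( Σ_{k=−∞}^{j_x} 2^{k(αs−n)} · σ(B_{k+1} \ B_k) )^m )^{1/(s−1)}. -/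
open MeasureTheory Metric Set Filter
open scoped ENNReal NNReal Topology

noncomputable section

/-! Write `γ = (αs - n)/(s - 1)`, `A_k = B(x₀, 2^{k+1}) \ B(x₀, 2^k)`, `a_k = 2^{k(αs-n)} σ(A_k)`
and `S_j = ∑_{k ≤ j} a_k`. By induction on `m`, `𝒩^m f ≥ C^m |y - x₀|^γ (S_k^m / m!)^{1/(s-1)}`
on `A_k`. For `r > 2^{j+2}` the ball `B(x, r)` contains every `A_k` with `k ≤ j`, so the
`(s-1)`-th power of this bound integrates over `B(x, r)` to at least a constant times
`∑_{k ≤ j} a_k S_k^m / m! ≥ S_j^{m+1} / (m+1)!`, a discrete form of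
`∫_0^S t^m/m! dt = S^{m+1}/(m+1)!`. Only the tail `r > 2^{j+2}` of the Wolff integral is kept;
there `∫ r^{γ-1} dr = 2^{(j+2)γ}/(-γ)`, which yields one more factor `C`, the `8^γ` absorbing the
ratio between `|x - x₀|` and `2^{j+2}`. -/

open Function

theorem add_pow_succ_le {R : Type*} [CommSemiring R] [PartialOrder R] [CanonicallyOrderedAdd R]
    [IsOrderedRing R] (x a : R) (m : ℕ) :
    (x + a) ^ (m + 1) ≤ x ^ (m + 1) + (m + 1) * a * (x + a) ^ m := by
  induction m with
  | zero => simp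
  | succ m ih =>
    calc (x + a) ^ (m + 1 + 1) = (x + a) ^ (m + 1) * (x + a) := pow_succ _ _
      _ ≤ (x ^ (m + 1) + (m + 1) * a * (x + a) ^ m) * (x + a) := by gcongr
      _ = x ^ (m + 1 + 1) + a * x ^ (m + 1) + (m + 1) * a * (x + a) ^ (m + 1) := by ring
      _ ≤ x ^ (m + 1 + 1) + a * (x + a) ^ (m + 1) + (m + 1) * a * (x + a) ^ (m + 1) := by
        gcongr; exact le_self_add
      _ = x ^ (m + 1 + 1) + ((m + 1 : ℕ) + 1) * a * (x + a) ^ (m + 1) := by push_cast; ring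

section PartialSums

variable {ι : Type*} [LinearOrder ι]

theorem sum_pow_succ_le (a S : ι → ℝ≥0∞)
    (hS : ∀ (F : Finset ι) (k : ι), (∀ j ∈ F, j ≤ k) → ∑ j ∈ F, a j ≤ S k) (m : ℕ) (F : Finset ι) :
    (∑ j ∈ F, a j) ^ (m + 1) ≤ (m + 1) * ∑ j ∈ F, a j * S j ^ m := by
  induction F using Finset.induction_on_max with
  | empty => simp
  | insert b F hb ih =>
    have hbF : b ∉ F := fun h => lt_irrefl b (hb b h)
    have hSb : ∑ j ∈ F, a j + a b ≤ S b := by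
      rw [add_comm, ← Finset.sum_insert hbF]
      exact hS _ b fun j hj => (Finset.mem_insert.1 hj).elim le_of_eq fun h => (hb j h).le
    rw [Finset.sum_insert hbF, Finset.sum_insert hbF, add_comm (a b)]
    calc (∑ j ∈ F, a j + a b) ^ (m + 1)
        ≤ (∑ j ∈ F, a j) ^ (m + 1) + (m + 1) * a b * (∑ j ∈ F, a j + a b) ^ m :=
          add_pow_succ_le _ _ _
      _ ≤ (m + 1) * ∑ j ∈ F, a j * S j ^ m + (m + 1) * a b * S b ^ m := by gcongr
      _ = (m + 1) * (a b * S b ^ m + ∑ j ∈ F, a j * S j ^ m) := by ring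

def sumIic (a : ι → ℝ≥0∞) (j : ι) : ℝ≥0∞ :=
  ∑' k, if k ≤ j then a k else 0

theorem sumIic_mono {a b : ι → ℝ≥0∞} {j : ι} (h : ∀ k ≤ j, a k ≤ b k) :
    sumIic a j ≤ sumIic b j :=
  ENNReal.tsum_le_tsum fun k => by split_ifs with hk; exacts [h k hk, le_rfl]

theorem sumIic_const_mul (c : ℝ≥0∞) (a : ι → ℝ≥0∞) (j : ι) :
    sumIic (fun k => c * a k) j = c * sumIic a j := by
  simp only [sumIic, ← ENNReal.tsum_mul_left, mul_ite, mul_zero]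

theorem sum_le_sumIic (a : ι → ℝ≥0∞) {F : Finset ι} {j : ι} (hF : ∀ k ∈ F, k ≤ j) :
    ∑ k ∈ F, a k ≤ sumIic a j :=
  calc ∑ k ∈ F, a k = ∑ k ∈ F, if k ≤ j then a k else 0 :=
        Finset.sum_congr rfl fun k hk => (if_pos (hF k hk)).symm
    _ ≤ sumIic a j := ENNReal.sum_le_tsum F

theorem sumIic_pow_succ_le (a : ι → ℝ≥0∞) (j : ι) (m : ℕ) :
    sumIic a j ^ (m + 1) ≤ (m + 1) * sumIic (fun k => a k * sumIic a k ^ m) j := by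
  rw [sumIic, ENNReal.tsum_eq_iSup_sum, ENNReal.iSup_pow]
  refine iSup_le fun F => ?_
  rw [← Finset.sum_filter]
  calc (∑ k ∈ F with k ≤ j, a k) ^ (m + 1)
      ≤ (m + 1) * ∑ k ∈ F with k ≤ j, a k * sumIic a k ^ m :=
        sum_pow_succ_le a _ (fun _ _ => sum_le_sumIic a) m _
    _ ≤ (m + 1) * sumIic (fun k => a k * sumIic a k ^ m) j := by
        gcongr
        exact sum_le_sumIic _ fun k hk => (Finset.mem_filter.1 hk).2

theorem inv_factorial_mul_sumIic_pow_le (a : ι → ℝ≥0∞) (j : ι) (m : ℕ) :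
    ((m + 1).factorial : ℝ≥0∞)⁻¹ * sumIic a j ^ (m + 1)
      ≤ (m.factorial : ℝ≥0∞)⁻¹ * sumIic (fun k => a k * sumIic a k ^ m) j := by
  have hfac : ((m + 1).factorial : ℝ≥0∞)⁻¹ = (m.factorial : ℝ≥0∞)⁻¹ * (m + 1 : ℝ≥0∞)⁻¹ := by
    rw [Nat.factorial_succ, Nat.cast_mul, ENNReal.mul_inv (by simp) (by simp), mul_comm]
    push_cast; rfl
  calc ((m + 1).factorial : ℝ≥0∞)⁻¹ * sumIic a j ^ (m + 1)
      ≤ (m.factorial : ℝ≥0∞)⁻¹ * ((m + 1 : ℝ≥0∞)⁻¹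
          * ((m + 1) * sumIic (fun k => a k * sumIic a k ^ m) j)) := by
        rw [hfac, mul_assoc]; gcongr; exact sumIic_pow_succ_le a j m
    _ = (m.factorial : ℝ≥0∞)⁻¹ * sumIic (fun k => a k * sumIic a k ^ m) j := by
        rw [← mul_assoc (m + 1 : ℝ≥0∞)⁻¹, ENNReal.inv_mul_cancel (by simp) (by simp), one_mul]

theorem sumIic_setLIntegral_le [Countable ι] {X : Type*} [MeasurableSpace X] {μ : Measure X}
    {A : ι → Set X} {B : Set X} {j : ι} (hA : ∀ k, MeasurableSet (A k))
    (hd : Pairwise (Disjoint on A)) (hB : ∀ k ≤ j, A k ⊆ B) (f : X → ℝ≥0∞) :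
    sumIic (fun k => ∫⁻ x in A k, f x ∂μ) j ≤ ∫⁻ x in B, f x ∂μ := by
  let A' k := if k ≤ j then A k else ∅
  have hA' : ∀ k, A' k ⊆ A k := fun k => by dsimp only [A']; split_ifs <;> simp
  calc sumIic (fun k => ∫⁻ x in A k, f x ∂μ) j = ∑' k, ∫⁻ x in A' k, f x ∂μ :=
        tsum_congr fun k => by dsimp only [A']; split_ifs <;> simp
    _ = ∫⁻ x in ⋃ k, A' k, f x ∂μ :=
        (lintegral_iUnion (fun k => by dsimp only [A']; split_ifs <;> simp [hA k])
          (fun k l hkl => (hd hkl).mono (hA' k) (hA' l)) f).symm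
    _ ≤ ∫⁻ x in B, f x ∂μ :=
        lintegral_mono_set <| iUnion_subset fun k => by
          dsimp only [A']; split_ifs with hk
          exacts [hB k hk, empty_subset B]

end PartialSums

section DyadicAnnuli

variable {E : Type*} [SeminormedAddCommGroup E]

def dyadicAnnulus (x₀ : E) (k : ℤ) : Set E :=
  Metric.ball x₀ ((2:ℝ) ^ (k + 1)) \ Metric.ball x₀ ((2:ℝ) ^ k)

theorem mem_dyadicAnnulus {x₀ y : E} {k : ℤ} :
    y ∈ dyadicAnnulus x₀ k ↔ (2:ℝ) ^ k ≤ ‖y - x₀‖ ∧ ‖y - x₀‖ < (2:ℝ) ^ (k + 1) := by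
  simp [dyadicAnnulus, mem_ball, dist_eq_norm, and_comm]

theorem dyadicAnnulus_subset_ball (x₀ : E) {k j : ℤ} (h : k ≤ j) :
    dyadicAnnulus x₀ k ⊆ Metric.ball x₀ ((2:ℝ) ^ (j + 1)) :=
  sdiff_subset.trans (ball_subset_ball (zpow_le_zpow_right₀ one_le_two (by omega)))

theorem pairwise_disjoint_dyadicAnnulus (x₀ : E) : Pairwise (Disjoint on dyadicAnnulus x₀) :=
  (pairwise_disjoint_on _).2 fun k l hkl => Set.disjoint_left.2 fun y hk hl =>
    ((mem_dyadicAnnulus.1 hk).2.trans_le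
      (zpow_le_zpow_right₀ one_le_two (by omega))).not_ge (mem_dyadicAnnulus.1 hl).1

theorem measurableSet_dyadicAnnulus [MeasurableSpace E] [OpensMeasurableSpace E] (x₀ : E)
    (k : ℤ) : MeasurableSet (dyadicAnnulus x₀ k) :=
  measurableSet_ball.diff measurableSet_ball

def dyadicMass [MeasurableSpace E] (β : ℝ) (μ : Measure E) (x₀ : E) (k : ℤ) : ℝ≥0∞ :=
  ENNReal.ofReal ((2:ℝ) ^ ((k:ℝ) * β)) * μ (dyadicAnnulus x₀ k)

theorem two_rpow_mul_two_rpow_intCast_mul (k : ℤ) (β : ℝ) :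
    (2:ℝ) ^ β * (2:ℝ) ^ ((k:ℝ) * β) = ((2:ℝ) ^ (k + 1)) ^ β := by
  rw [← Real.rpow_add two_pos, ← Real.rpow_intCast, ← Real.rpow_mul zero_le_two]
  push_cast; ring_nf

theorem mul_dyadicMass_le_setLIntegral [MeasurableSpace E] [OpensMeasurableSpace E]
    {μ : Measure E} {x₀ : E} {p β : ℝ} (hp : 0 < p) (hβ : β ≤ 0) {c b : ℝ≥0∞} {g : E → ℝ≥0∞}
    {k : ℤ} (hg : ∀ y ∈ dyadicAnnulus x₀ k,
      c * ENNReal.ofReal ‖y - x₀‖ ^ (β / p) * b ^ (1 / p) ≤ g y) :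
    c ^ p * ENNReal.ofReal (2 ^ β) * b * dyadicMass β μ x₀ k
      ≤ ∫⁻ y in dyadicAnnulus x₀ k, g y ^ p ∂μ := by
  have hpt : ∀ y ∈ dyadicAnnulus x₀ k,
      c ^ p * ENNReal.ofReal (2 ^ β) * b * ENNReal.ofReal ((2:ℝ) ^ ((k:ℝ) * β)) ≤ g y ^ p := by
    intro y hy
    obtain ⟨hlo, hhi⟩ := mem_dyadicAnnulus.1 hy
    have hy₀ : 0 < ‖y - x₀‖ := (zpow_pos two_pos k).trans_le hlo
    have hscale : ENNReal.ofReal (2 ^ β) * ENNReal.ofReal ((2:ℝ) ^ ((k:ℝ) * β))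
        ≤ ENNReal.ofReal ‖y - x₀‖ ^ β := by
      rw [← ENNReal.ofReal_mul (by positivity), two_rpow_mul_two_rpow_intCast_mul,
        ENNReal.ofReal_rpow_of_pos hy₀]
      exact ENNReal.ofReal_le_ofReal (Real.rpow_le_rpow_of_nonpos hy₀ hhi.le hβ)
    calc c ^ p * ENNReal.ofReal (2 ^ β) * b * ENNReal.ofReal ((2:ℝ) ^ ((k:ℝ) * β))
        = c ^ p * (ENNReal.ofReal (2 ^ β) * ENNReal.ofReal ((2:ℝ) ^ ((k:ℝ) * β))) * b := by ring
      _ ≤ c ^ p * ENNReal.ofReal ‖y - x₀‖ ^ β * b := by gcongr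
      _ = (c * ENNReal.ofReal ‖y - x₀‖ ^ (β / p) * b ^ (1 / p)) ^ p := by
        rw [ENNReal.mul_rpow_of_nonneg _ _ hp.le, ENNReal.mul_rpow_of_nonneg _ _ hp.le,
          ← ENNReal.rpow_mul, ← ENNReal.rpow_mul, div_mul_cancel₀ _ hp.ne',
          one_div_mul_cancel hp.ne', ENNReal.rpow_one]
      _ ≤ g y ^ p := ENNReal.rpow_le_rpow (hg y hy) hp.le
  calc c ^ p * ENNReal.ofReal (2 ^ β) * b * dyadicMass β μ x₀ k
      = ∫⁻ _ in dyadicAnnulus x₀ k,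
          c ^ p * ENNReal.ofReal (2 ^ β) * b * ENNReal.ofReal ((2:ℝ) ^ ((k:ℝ) * β)) ∂μ := by
        rw [setLIntegral_const, dyadicMass]; ring
    _ ≤ ∫⁻ y in dyadicAnnulus x₀ k, g y ^ p ∂μ :=
        setLIntegral_mono' (measurableSet_dyadicAnnulus x₀ k) hpt

theorem mul_sumIic_le_setLIntegral_ball [MeasurableSpace E] [OpensMeasurableSpace E]
    {μ : Measure E} {x₀ x : E} {p β : ℝ} (hp : 0 < p) (hβ : β ≤ 0) {c : ℝ≥0∞} {m : ℕ}
    {g : E → ℝ≥0∞}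
    (hg : ∀ (k : ℤ), ∀ y ∈ dyadicAnnulus x₀ k,
      c * ENNReal.ofReal ‖y - x₀‖ ^ (β / p)
        * ((m.factorial : ℝ≥0∞)⁻¹ * sumIic (dyadicMass β μ x₀) k ^ m) ^ (1 / p) ≤ g y)
    {j : ℤ} {r : ℝ} (hr : ‖x - x₀‖ + (2:ℝ) ^ (j + 1) ≤ r) :
    c ^ p * ENNReal.ofReal (2 ^ β)
        * (((m + 1).factorial : ℝ≥0∞)⁻¹ * sumIic (dyadicMass β μ x₀) j ^ (m + 1))
      ≤ ∫⁻ y in Metric.ball x r, g y ^ p ∂μ := by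
  set S := sumIic (dyadicMass β μ x₀)
  have hsub : ∀ k ≤ j, dyadicAnnulus x₀ k ⊆ Metric.ball x r := fun k hk =>
    (dyadicAnnulus_subset_ball x₀ hk).trans <| ball_subset_ball' <| by
      rw [dist_comm, dist_eq_norm]; linarith
  calc c ^ p * ENNReal.ofReal (2 ^ β) * (((m + 1).factorial : ℝ≥0∞)⁻¹ * S j ^ (m + 1))
      ≤ c ^ p * ENNReal.ofReal (2 ^ β)
          * ((m.factorial : ℝ≥0∞)⁻¹ * sumIic (fun k => dyadicMass β μ x₀ k * S k ^ m) j) := by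
        gcongr c ^ p * ENNReal.ofReal (2 ^ β) * ?_
        exact inv_factorial_mul_sumIic_pow_le (dyadicMass β μ x₀) j m
    _ = sumIic (fun k => c ^ p * ENNReal.ofReal (2 ^ β)
          * ((m.factorial : ℝ≥0∞)⁻¹ * S k ^ m) * dyadicMass β μ x₀ k) j := by
        simp only [← sumIic_const_mul]; congr 1; ext k; ring
    _ ≤ sumIic (fun k => ∫⁻ y in dyadicAnnulus x₀ k, g y ^ p ∂μ) j :=
        sumIic_mono fun k _ => mul_dyadicMass_le_setLIntegral hp hβ (hg k)
    _ ≤ ∫⁻ y in Metric.ball x r, g y ^ p ∂μ :=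
        sumIic_setLIntegral_le (measurableSet_dyadicAnnulus x₀)
          (pairwise_disjoint_dyadicAnnulus x₀) hsub _

end DyadicAnnuli

theorem lintegral_Ioi_ofReal_rpow_s8 {R γ : ℝ} (hR : 0 < R) (hγ : γ < 0) :
    ∫⁻ r in Ioi R, ENNReal.ofReal (r ^ (γ - 1)) = ENNReal.ofReal (R ^ γ / -γ) := by
  rw [← ofReal_integral_eq_lintegral_ofReal (integrableOn_Ioi_rpow_of_lt (by linarith) hR)
      (ae_restrict_of_forall_mem measurableSet_Ioi fun r hr =>
        (Real.rpow_pos_of_pos (hR.trans hr) _).le),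
    integral_Ioi_rpow_of_lt (by linarith) hR, sub_add_cancel, div_neg, neg_div]

theorem eight_rpow_mul_rpow_le {γ u : ℝ} {j : ℤ} (hγ : γ ≤ 0) (hj : (2:ℝ) ^ j ≤ u) :
    8 ^ γ * u ^ γ ≤ 2 ^ γ * ((2:ℝ) ^ (j + 2)) ^ γ := by
  have h2j : (0:ℝ) < 2 ^ j := zpow_pos two_pos j
  have hscale : (8:ℝ) * 2 ^ j = 2 * 2 ^ (j + 2) := by
    rw [zpow_add₀ two_ne_zero]; norm_num; ring
  calc 8 ^ γ * u ^ γ ≤ 8 ^ γ * ((2:ℝ) ^ j) ^ γ := by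
        gcongr 8 ^ γ * ?_
        exact Real.rpow_le_rpow_of_nonpos h2j hj hγ
    _ = 2 ^ γ * ((2:ℝ) ^ (j + 2)) ^ γ := by
        rw [← Real.mul_rpow (by norm_num) h2j.le, hscale, Real.mul_rpow zero_le_two (by positivity)]

section WolffPotential

variable {n : ℕ} {α s : ℝ}

theorem le_Nop_of_le_setLIntegral_ball (hs : 1 < s) (hαs : α * s < n) {R : ℝ} (hR : 0 < R)
    {σ : Measure (En n)} {g : En n → ℝ≥0∞} {x : En n} {M : ℝ≥0∞}
    (hM : ∀ r, R < r → M ≤ ∫⁻ y in Metric.ball x r, g y ^ (s - 1) ∂σ) :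
    M ^ (1 / (s - 1)) * ENNReal.ofReal (R ^ ((α * s - n) / (s - 1)) / -((α * s - n) / (s - 1)))
      ≤ Nop n α s σ g x := by
  set γ := (α * s - n) / (s - 1)
  have hs₁ : 0 < s - 1 := by linarith
  have hγ : γ < 0 := div_neg_of_neg_of_pos (by linarith) hs₁
  have hpt : ∀ r ∈ Ioi R, M ^ (1 / (s - 1)) * ENNReal.ofReal (r ^ (γ - 1))
      ≤ (ENNReal.ofReal (r ^ (α * s - n)) * ∫⁻ y in Metric.ball x r, g y ^ (s - 1) ∂σ)
          ^ (1 / (s - 1)) * ENNReal.ofReal r⁻¹ := by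
    intro r hr
    have hr₀ : 0 < r := hR.trans hr
    have hkernel : ENNReal.ofReal (r ^ (α * s - n)) ^ (1 / (s - 1)) * ENNReal.ofReal r⁻¹
        = ENNReal.ofReal (r ^ (γ - 1)) := by
      rw [ENNReal.ofReal_rpow_of_pos (by positivity), ← ENNReal.ofReal_mul (by positivity),
        ← Real.rpow_mul hr₀.le, ← Real.rpow_neg_one, ← Real.rpow_add hr₀, mul_one_div,
        ← sub_eq_add_neg]
    calc M ^ (1 / (s - 1)) * ENNReal.ofReal (r ^ (γ - 1))
        = (ENNReal.ofReal (r ^ (α * s - n)) * M) ^ (1 / (s - 1)) * ENNReal.ofReal r⁻¹ := by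
          rw [← hkernel, ENNReal.mul_rpow_of_nonneg _ _ (by positivity)]; ring
      _ ≤ _ := by gcongr; exact hM r hr
  calc M ^ (1 / (s - 1)) * ENNReal.ofReal (R ^ γ / -γ)
      = ∫⁻ r in Ioi R, M ^ (1 / (s - 1)) * ENNReal.ofReal (r ^ (γ - 1)) := by
        rw [lintegral_const_mul _ (by fun_prop), lintegral_Ioi_ofReal_rpow_s8 hR hγ]
    _ ≤ ∫⁻ r in Ioi R, (ENNReal.ofReal (r ^ (α * s - n))
          * ∫⁻ y in Metric.ball x r, g y ^ (s - 1) ∂σ) ^ (1 / (s - 1)) * ENNReal.ofReal r⁻¹ :=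
        setLIntegral_mono' measurableSet_Ioi hpt
    _ ≤ Nop n α s σ g x := lintegral_mono_set (Ioi_subset_Ioi hR.le)

theorem le_Nop_of_dyadic_lower_bound (hs : 1 < s) (hαs : α * s < n) {σ : Measure (En n)}
    {x₀ : En n} {g : En n → ℝ≥0∞} {c : ℝ≥0∞} {m : ℕ}
    (hg : ∀ (k : ℤ), ∀ y ∈ dyadicAnnulus x₀ k,
      c * ENNReal.ofReal ‖y - x₀‖ ^ ((α * s - n) / (s - 1))
        * ((m.factorial : ℝ≥0∞)⁻¹ * sumIic (dyadicMass (α * s - n) σ x₀) k ^ m) ^ (1 / (s - 1))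
        ≤ g y)
    {x : En n} {j : ℤ} (hj₁ : (2:ℝ) ^ j ≤ ‖x - x₀‖) (hj₂ : ‖x - x₀‖ < (2:ℝ) ^ (j + 1)) :
    c * ENNReal.ofReal ((s - 1) / (n - α * s) * 8 ^ ((α * s - n) / (s - 1)))
        * ENNReal.ofReal ‖x - x₀‖ ^ ((α * s - n) / (s - 1))
        * (((m + 1).factorial : ℝ≥0∞)⁻¹ * sumIic (dyadicMass (α * s - n) σ x₀) j ^ (m + 1))
          ^ (1 / (s - 1))
      ≤ Nop n α s σ g x := by
  set β := α * s - n
  set p := s - 1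
  set γ := β / p
  set S := sumIic (dyadicMass β σ x₀)
  set B := ((m + 1).factorial : ℝ≥0∞)⁻¹ * S j ^ (m + 1)
  set R : ℝ := 2 ^ (j + 2)
  have hp : 0 < p := by simp only [p]; linarith
  have hβ : β < 0 := by simp only [β]; linarith
  have hγ : γ < 0 := div_neg_of_neg_of_pos hβ hp
  have hx : 0 < ‖x - x₀‖ := (zpow_pos two_pos j).trans_le hj₁
  have hball : ∀ r, R < r → c ^ p * ENNReal.ofReal (2 ^ β) * B
      ≤ ∫⁻ y in Metric.ball x r, g y ^ p ∂σ := by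
    intro r hr
    refine mul_sumIic_le_setLIntegral_ball hp hβ.le hg ?_
    have : R = 2 ^ (j + 1) * 2 := by
      rw [← zpow_add_one₀ two_ne_zero, add_assoc]; norm_num [R]
    linarith
  have hroot : (c ^ p * ENNReal.ofReal (2 ^ β) * B) ^ (1 / p)
      = c * ENNReal.ofReal (2 ^ γ) * B ^ (1 / p) := by
    rw [ENNReal.mul_rpow_of_nonneg _ _ (by positivity),
      ENNReal.mul_rpow_of_nonneg _ _ (by positivity), ← ENNReal.rpow_mul,
      mul_one_div_cancel hp.ne', ENNReal.rpow_one,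
      ENNReal.ofReal_rpow_of_nonneg (by positivity) (by positivity), ← Real.rpow_mul zero_le_two,
      mul_one_div]
  have hconst : ENNReal.ofReal (p / (n - α * s) * 8 ^ γ) * ENNReal.ofReal ‖x - x₀‖ ^ γ
      ≤ ENNReal.ofReal (2 ^ γ) * ENNReal.ofReal (R ^ γ / -γ) := by
    have hnαs : 0 < n - α * s := by linarith
    rw [ENNReal.ofReal_rpow_of_pos hx, ← ENNReal.ofReal_mul (by positivity),
      ← ENNReal.ofReal_mul (by positivity)]
    refine ENNReal.ofReal_le_ofReal ?_
    calc p / (n - α * s) * 8 ^ γ * ‖x - x₀‖ ^ γ = p / (n - α * s) * (8 ^ γ * ‖x - x₀‖ ^ γ) := by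
          ring
      _ ≤ p / (n - α * s) * (2 ^ γ * R ^ γ) :=
          mul_le_mul_of_nonneg_left (eight_rpow_mul_rpow_le hγ.le hj₁) (by positivity)
      _ = 2 ^ γ * (R ^ γ / -γ) := by
          rw [show -γ = (n - α * s) / p by simp only [γ, β]; ring]
          field_simp
  calc c * ENNReal.ofReal (p / (n - α * s) * 8 ^ γ) * ENNReal.ofReal ‖x - x₀‖ ^ γ * B ^ (1 / p)
      = c * (ENNReal.ofReal (p / (n - α * s) * 8 ^ γ) * ENNReal.ofReal ‖x - x₀‖ ^ γ)
          * B ^ (1 / p) := by ring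
    _ ≤ c * (ENNReal.ofReal (2 ^ γ) * ENNReal.ofReal (R ^ γ / -γ)) * B ^ (1 / p) := by gcongr
    _ = (c ^ p * ENNReal.ofReal (2 ^ β) * B) ^ (1 / p) * ENNReal.ofReal (R ^ γ / -γ) := by
        rw [hroot]; ring
    _ ≤ Nop n α s σ g x := le_Nop_of_le_setLIntegral_ball hs hαs (by positivity) hball

theorem le_iterate_Nop (hs : 1 < s) (hαs : α * s < n) (σ : Measure (En n)) (x₀ : En n) (m : ℕ)
    {x : En n} {j : ℤ} (hj₁ : (2:ℝ) ^ j ≤ ‖x - x₀‖) (hj₂ : ‖x - x₀‖ < (2:ℝ) ^ (j + 1)) :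
    ENNReal.ofReal ((s - 1) / (n - α * s) * 8 ^ ((α * s - n) / (s - 1))) ^ m
        * ENNReal.ofReal ‖x - x₀‖ ^ ((α * s - n) / (s - 1))
        * ((m.factorial : ℝ≥0∞)⁻¹ * sumIic (dyadicMass (α * s - n) σ x₀) j ^ m) ^ (1 / (s - 1))
      ≤ (Nop n α s σ)^[m] (fun y => ENNReal.ofReal ‖y - x₀‖ ^ ((α * s - n) / (s - 1))) x := by
  induction m generalizing x j with
  | zero => simp
  | succ m ih =>
    rw [Function.iterate_succ_apply', pow_succ]
    exact le_Nop_of_dyadic_lower_bound hs hαs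
      (fun k y hy => ih (mem_dyadicAnnulus.1 hy).1 (mem_dyadicAnnulus.1 hy).2) hj₁ hj₂

end WolffPotential

open scoped Classical in
theorem statement8_general (n : ℕ) (α s : ℝ) (hs : 1 < s)
    (hαs : α * s < n)
    (σ : Measure (En n))
    (x₀ x : En n) (jx : ℤ)
    (hjx₁ : (2:ℝ)^jx ≤ ‖x - x₀‖) (hjx₂ : ‖x - x₀‖ < (2:ℝ)^(jx+1))
    (m : ℕ) :
    ENNReal.ofReal (((s-1)/((n:ℝ) - α*s)) * (8:ℝ) ^ ((α*s-(n:ℝ))/(s-1))) ^ m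
        * (ENNReal.ofReal ‖x - x₀‖) ^ ((α*s-(n:ℝ))/(s-1))
        * (((m.factorial : ℝ≥0∞))⁻¹
            * (∑' k : ℤ, if k ≤ jx then
                  ENNReal.ofReal ((2:ℝ) ^ ((k:ℝ) * (α*s-(n:ℝ))))
                    * σ (Metric.ball x₀ ((2:ℝ)^(k+1)) \ Metric.ball x₀ ((2:ℝ)^k))
                else 0) ^ m) ^ (1/(s-1))
      ≤ (Nop n α s σ)^[m]
          (fun y => (ENNReal.ofReal ‖y - x₀‖) ^ ((α*s-(n:ℝ))/(s-1))) x :=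
  le_iterate_Nop hs hαs σ x₀ m hjx₁ hjx₂

open scoped Classical in
/-- Lemma `greenlowbd1`: with `f(y) = |y-x₀|^{(αs-n)/(s-1)}`,
`2^{j_x} ≤ |x-x₀| < 2^{j_x+1}` and `B_k = B(x₀,2^k)`, one has for every `m ≥ 1`:
`𝒩^m(f)(x) ≥ ((s-1)/(n-αs) · 8^{(αs-n)/(s-1)})^m |x-x₀|^{(αs-n)/(s-1)}
  ((1/m!) (Σ_{k=-∞}^{j_x} 2^{k(αs-n)} σ(B_{k+1} \ B_k))^m)^{1/(s-1)}`. -/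
theorem statement8 (n : ℕ) (hn : 2 ≤ n) (α s : ℝ) (hs : 1 < s) (hα : 0 < α)
    (hαs : α * s < n)
    (σ : Measure (En n)) [IsLocallyFiniteMeasure σ]
    (x₀ x : En n) (hx : x ≠ x₀) (jx : ℤ)
    (hjx₁ : (2:ℝ)^jx ≤ ‖x - x₀‖) (hjx₂ : ‖x - x₀‖ < (2:ℝ)^(jx+1))
    (m : ℕ) (hm : 1 ≤ m) :
    ENNReal.ofReal (((s-1)/((n:ℝ) - α*s)) * (8:ℝ) ^ ((α*s-(n:ℝ))/(s-1))) ^ m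
        * (ENNReal.ofReal ‖x - x₀‖) ^ ((α*s-(n:ℝ))/(s-1))
        * (((m.factorial : ℝ≥0∞))⁻¹
            * (∑' k : ℤ, if k ≤ jx then
                  ENNReal.ofReal ((2:ℝ) ^ ((k:ℝ) * (α*s-(n:ℝ))))
                    * σ (Metric.ball x₀ ((2:ℝ)^(k+1)) \ Metric.ball x₀ ((2:ℝ)^k))
                else 0) ^ m) ^ (1/(s-1))
      ≤ (Nop n α s σ)^[m]
          (fun y => (ENNReal.ofReal ‖y - x₀‖) ^ ((α*s-(n:ℝ))/(s-1))) x :=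
  statement8_general n α s hs hαs σ x₀ x jx hjx₁ hjx₂ m
end
end

section
/- Let x₀ ∈ ℝⁿ and let f(y) = |y−x₀|^{(αs−n)/(s−1)}. Then for every integer m ≥ 1 and every x ∈ ℝⁿ with x ≠ x₀, 𝒩^m(f)(x) ≥ (3/2)^{(αs−n)/(s−1)} · (1/m!) · |x−x₀|^{(αs−n)/(s−1)} · ( ∫_0^{|x−x₀|} (σ(B(x,r/2))/r^{n−αs})^{1/(s−1)} dr/r )^m. -/
/-!
Write `R = |x - x₀|`, `g` for the integrand of the Wolff potential of `σ` over the half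
balls `B(x, ρ/2)`, and `ν = g dρ`. Since `β = (αs - n)/(s - 1) ≤ 0`, on `B(x, R/2)` the function
`f` is at least `C = (3R/2)^β`. If `y ∈ B(x, r/2)` and `ρ > r`, then `B(x, ρ/2) ⊆ B(y, ρ)`, so a
lower bound `c ρ` for a function `G` on `B(x, ρ/2)` gives `𝒩 G (y) ≥ ∫_r^R c dν`. Iterating,
`𝒩^k f (y) ≥ C ν((r, R))^k / k!`, because `ν` has no atoms and hence
`∫_{(a,b)} ν((ρ, b))^m dν(ρ) ≥ ν((a, b))^(m+1) / (m+1)`: by the layer-cake formula it suffices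
that the distribution of `ρ ↦ ν((ρ, b))` under `ν` dominates that of `u ↦ T - u` on `(0, T)`,
`T = ν((a, b))`, under Lebesgue measure. Finally let `r → 0`.
-/

open MeasureTheory Metric Set Filter
open scoped ENNReal NNReal Topology

noncomputable section

lemma volume_restrict_Ioi_setOf_ofReal_lt (X : ℝ≥0∞) :
    volume.restrict (Ioi (0 : ℝ)) {t | ENNReal.ofReal t < X} = X := by
  rw [Measure.restrict_apply (measurableSet_lt ENNReal.measurable_ofReal measurable_const)]
  rcases eq_or_ne X ⊤ with rfl | hX
  · simp
  · have : {t | ENNReal.ofReal t < X} ∩ Ioi 0 = Ioo 0 X.toReal := by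
      ext t
      simp only [mem_inter_iff, mem_ofPred_eq, mem_Ioi, mem_Ioo]
      constructor
      · rintro ⟨ht, h0⟩
        exact ⟨h0, (ENNReal.ofReal_lt_iff_lt_toReal h0.le hX).1 ht⟩
      · rintro ⟨h0, ht⟩
        exact ⟨(ENNReal.ofReal_lt_iff_lt_toReal h0.le hX).2 ht, h0⟩
    rw [this, Real.volume_Ioo, sub_zero, ENNReal.ofReal_toReal hX]

theorem lintegral_eq_lintegral_measure_ofReal_lt {α : Type*} [MeasurableSpace α]
    (μ : Measure α) [SFinite μ] {h : α → ℝ≥0∞} (hh : Measurable h) :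
    ∫⁻ x, h x ∂μ = ∫⁻ t in Ioi (0 : ℝ), μ {x | ENNReal.ofReal t < h x} := by
  have hS : MeasurableSet {p : α × ℝ | ENNReal.ofReal p.2 < h p.1} :=
    measurableSet_lt measurable_snd.ennreal_ofReal (hh.comp measurable_fst)
  calc ∫⁻ x, h x ∂μ
      = ∫⁻ x, volume.restrict (Ioi (0 : ℝ)) {t | ENNReal.ofReal t < h x} ∂μ := by
        simp only [volume_restrict_Ioi_setOf_ofReal_lt]
    _ = (μ.prod (volume.restrict (Ioi 0))) {p : α × ℝ | ENNReal.ofReal p.2 < h p.1} :=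
        (Measure.prod_apply hS).symm
    _ = ∫⁻ t in Ioi (0 : ℝ), μ {x | ENNReal.ofReal t < h x} := Measure.prod_apply_symm hS

lemma tendsto_measure_Ioo_nhdsGT (ν : Measure ℝ) (c b : ℝ) :
    Tendsto (fun u => ν (Ioo u b)) (𝓝[>] c) (𝓝 (ν (Ioo c b))) := by
  have : (atBot : Filter (Ioi c)).IsCountablyGenerated := by
    rw [← comap_coe_Ioi_nhdsGT]
    infer_instance
  have hU : ⋃ u : Ioi c, Ioo (u : ℝ) b = Ioo c b := by
    ext ρ
    simp only [mem_iUnion, mem_Ioo, Subtype.exists, mem_Ioi, exists_prop]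
    constructor
    · rintro ⟨u, hcu, huρ, hρb⟩
      exact ⟨hcu.trans huρ, hρb⟩
    · rintro ⟨hcρ, hρb⟩
      obtain ⟨u, hcu, huρ⟩ := exists_between hcρ
      exact ⟨u, hcu, huρ, hρb⟩
  have h := tendsto_measure_iUnion_atBot (μ := ν) (s := fun u : Ioi c => Ioo (u : ℝ) b)
    fun u v huv => Ioo_subset_Ioo_left huv
  rw [hU] at h
  rw [← map_coe_Ioi_atBot, tendsto_map'_iff]
  exact h

lemma measure_Ioo_le_measure_setOf_lt_add (ν : Measure ℝ) [NullSingletonClass ν] (a b : ℝ)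
    (s : ℝ≥0∞) : ν (Ioo a b) ≤ ν {ρ ∈ Ioo a b | s < ν (Ioo ρ b)} + s := by
  set V := {ρ ∈ Ioo a b | ν (Ioo ρ b) ≤ s}
  suffices hV : ν V ≤ s by
    calc ν (Ioo a b) ≤ ν ({ρ ∈ Ioo a b | s < ν (Ioo ρ b)} ∪ V) :=
          measure_mono fun ρ hρ => (lt_or_ge s (ν (Ioo ρ b))).imp (⟨hρ, ·⟩) (⟨hρ, ·⟩)
      _ ≤ _ := (measure_union_le _ _).trans (by gcongr)
  rcases V.eq_empty_or_nonempty with hVe | hVne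
  · simp [hVe]
  set c := sInf V
  have hbdd : BddBelow V := ⟨a, fun ρ hρ => hρ.1.1.le⟩
  have hVc : V ⊆ insert c (Ioo c b) := fun ρ hρ =>
    (csInf_le hbdd hρ).eq_or_lt.imp Eq.symm (⟨·, hρ.1.2⟩)
  have hc : ν (Ioo c b) ≤ s := by
    refine le_of_tendsto (tendsto_measure_Ioo_nhdsGT ν c b) ?_
    filter_upwards [self_mem_nhdsWithin] with u hu
    obtain ⟨v, hv, hvu⟩ := exists_lt_of_csInf_lt hVne hu
    exact (measure_mono (Ioo_subset_Ioo_left hvu.le)).trans hv.2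
  calc ν V ≤ ν (insert c (Ioo c b)) := measure_mono hVc
    _ = ν (Ioo c b) := measure_congr (insert_ae_eq_self c _)
    _ ≤ s := hc

lemma integral_Ioo_sub_pow (t : ℝ) (ht : 0 ≤ t) (m : ℕ) :
    ∫ u in Ioo 0 t, (t - u) ^ m = t ^ (m + 1) / (m + 1) := by
  rw [← integral_Ioc_eq_integral_Ioo, ← intervalIntegral.integral_of_le ht,
    intervalIntegral.integral_comp_sub_left (fun u => u ^ m), sub_self, sub_zero, integral_pow]
  simp

lemma pow_succ_le_mul_lintegral_sub_ofReal_pow (T : ℝ≥0∞) (m : ℕ) :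
    T ^ (m + 1) ≤ (m + 1) * ∫⁻ u in Ioi (0 : ℝ), (T - ENNReal.ofReal u) ^ m := by
  rcases eq_or_ne T ⊤ with rfl | hT
  · simp [ENNReal.top_sub, ENNReal.mul_top]
  obtain ⟨t, ht, rfl⟩ : ∃ t : ℝ, 0 ≤ t ∧ ENNReal.ofReal t = T :=
    ⟨T.toReal, ENNReal.toReal_nonneg, ENNReal.ofReal_toReal hT⟩
  have hint : IntegrableOn (fun u => (t - u) ^ m) (Ioo 0 t) :=
    (continuous_const.sub continuous_id).pow m |>.integrableOn_Icc.mono_set Ioo_subset_Icc_self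
  have hnn : 0 ≤ᵐ[volume.restrict (Ioo 0 t)] fun u => (t - u) ^ m :=
    (ae_restrict_iff' measurableSet_Ioo).2
      (ae_of_all _ fun u hu => pow_nonneg (by linarith [hu.2]) m)
  calc ENNReal.ofReal t ^ (m + 1)
      = (m + 1) * ENNReal.ofReal (t ^ (m + 1) / (m + 1)) := by
        rw [← ENNReal.ofReal_pow ht, ← ENNReal.ofReal_natCast, ← ENNReal.ofReal_one,
          ← ENNReal.ofReal_add (by positivity) zero_le_one, ← ENNReal.ofReal_mul (by positivity)]
        field_simp
    _ = (m + 1) * ∫⁻ u in Ioo 0 t, ENNReal.ofReal ((t - u) ^ m) := by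
        rw [← integral_Ioo_sub_pow t ht, ofReal_integral_eq_lintegral_ofReal hint hnn]
    _ ≤ (m + 1) * ∫⁻ u in Ioi (0 : ℝ), (ENNReal.ofReal t - ENNReal.ofReal u) ^ m := by
        gcongr (m + 1 : ℝ≥0∞) * ?_
        refine (setLIntegral_congr_fun measurableSet_Ioo fun u hu => ?_).trans_le
          (lintegral_mono_set Ioo_subset_Ioi_self)
        rw [ENNReal.ofReal_pow (by linarith [hu.2]), ENNReal.ofReal_sub _ hu.1.le]

theorem pow_succ_le_mul_setLIntegral_measure_Ioo_pow (ν : Measure ℝ) [SFinite ν]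
    [NullSingletonClass ν] (a b : ℝ) (m : ℕ) :
    ν (Ioo a b) ^ (m + 1) ≤ (m + 1) * ∫⁻ ρ in Ioo a b, ν (Ioo ρ b) ^ m ∂ν := by
  rcases m.eq_zero_or_pos with rfl | hm
  · simp
  set T := ν (Ioo a b)
  have hF : Measurable fun ρ => ν (Ioo ρ b) ^ m :=
    (Antitone.measurable fun u v h => measure_mono (Ioo_subset_Ioo_left h)).pow_const m
  refine (pow_succ_le_mul_lintegral_sub_ofReal_pow T m).trans ?_
  gcongr (m + 1 : ℝ≥0∞) * ?_
  rw [lintegral_eq_lintegral_measure_ofReal_lt _ (by fun_prop),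
    lintegral_eq_lintegral_measure_ofReal_lt _ hF]
  refine setLIntegral_mono' measurableSet_Ioi fun t _ => ?_
  set s := ENNReal.ofReal t ^ (m : ℝ)⁻¹
  have hlt : ∀ x : ℝ≥0∞, ENNReal.ofReal t < x ^ m ↔ s < x := fun x => by
    rw [← ENNReal.rpow_natCast, ENNReal.rpow_inv_lt_iff (by positivity)]
  calc volume.restrict (Ioi 0) {u | ENNReal.ofReal t < (T - ENNReal.ofReal u) ^ m}
      ≤ volume.restrict (Ioi 0) {u | ENNReal.ofReal u < T - s} := by
        refine measure_mono fun u hu => ?_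
        rw [mem_ofPred_eq, lt_tsub_iff_right, add_comm, ← lt_tsub_iff_right]
        exact (hlt _).1 hu
    _ = T - s := volume_restrict_Ioi_setOf_ofReal_lt _
    _ ≤ ν {ρ ∈ Ioo a b | s < ν (Ioo ρ b)} :=
        tsub_le_iff_right.2 (measure_Ioo_le_measure_setOf_lt_add ν a b s)
    _ = ν.restrict (Ioo a b) {ρ | ENNReal.ofReal t < ν (Ioo ρ b) ^ m} := by
        rw [Measure.restrict_apply' measurableSet_Ioo]
        congr 1
        ext ρ
        simp [hlt, and_comm]

lemma ENNReal.mul_div_rpow_one_div_sub_one {s : ℝ} (hs : 1 < s) (c A D : ℝ≥0∞) :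
    c * (A / D) ^ (1 / (s - 1)) = (D⁻¹ * (c ^ (s - 1) * A)) ^ (1 / (s - 1)) := by
  have hs' : 0 ≤ 1 / (s - 1) := by
    have : 0 < s - 1 := by linarith
    positivity
  rw [div_eq_mul_inv, ENNReal.mul_rpow_of_nonneg _ _ hs', ENNReal.mul_rpow_of_nonneg _ _ hs',
    ENNReal.mul_rpow_of_nonneg _ _ hs', ← ENNReal.rpow_mul,
    mul_one_div_cancel (by linarith : s - 1 ≠ 0), ENNReal.rpow_one]
  ring

def wolffIntegrandHalf (n : ℕ) (α s : ℝ) (σ : Measure (En n)) (x : En n) (ρ : ℝ) : ℝ≥0∞ :=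
  (σ (ball x (ρ / 2)) / ENNReal.ofReal (ρ ^ ((n : ℝ) - α * s))) ^ (1 / (s - 1))
    * ENNReal.ofReal ρ⁻¹

lemma measurable_wolffIntegrandHalf (n : ℕ) (α s : ℝ) (σ : Measure (En n)) (x : En n) :
    Measurable (wolffIntegrandHalf n α s σ x) := by
  have hball : Monotone fun ρ : ℝ => σ (ball x (ρ / 2)) := fun u v huv =>
    measure_mono (ball_subset_ball (by linarith))
  unfold wolffIntegrandHalf
  exact ((hball.measurable.div (by fun_prop)).pow_const _).mul (by fun_prop)

theorem setLIntegral_mul_wolffIntegrandHalf_le_Nop {n : ℕ} {α s : ℝ} (hs : 1 < s)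
    (σ : Measure (En n)) {x y : En n} {r R : ℝ} (hr : 0 < r) (hy : dist y x < r / 2)
    {G : En n → ℝ≥0∞} {c : ℝ → ℝ≥0∞} (hG : ∀ ρ ∈ Ioo r R, ∀ z ∈ ball x (ρ / 2), c ρ ≤ G z) :
    ∫⁻ ρ in Ioo r R, c ρ * wolffIntegrandHalf n α s σ x ρ ≤ Nop n α s σ G y := by
  refine le_trans ?_ (lintegral_mono_set (fun ρ hρ => hr.trans hρ.1 : Ioo r R ⊆ Ioi 0))
  refine setLIntegral_mono' measurableSet_Ioo fun ρ hρ => ?_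
  have hρ0 : 0 < ρ := hr.trans hρ.1
  have hball : ball x (ρ / 2) ⊆ ball y ρ := fun z hz => by
    rw [mem_ball] at hz ⊢
    linarith [dist_triangle z x y, dist_comm x y, hρ.1]
  have hmass : c ρ ^ (s - 1) * σ (ball x (ρ / 2)) ≤ ∫⁻ z in ball y ρ, G z ^ (s - 1) ∂σ :=
    calc c ρ ^ (s - 1) * σ (ball x (ρ / 2))
        = ∫⁻ _ in ball x (ρ / 2), c ρ ^ (s - 1) ∂σ := (setLIntegral_const _ _).symm
      _ ≤ ∫⁻ z in ball x (ρ / 2), G z ^ (s - 1) ∂σ :=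
          setLIntegral_mono' measurableSet_ball fun z hz =>
            ENNReal.rpow_le_rpow (hG ρ hρ z hz) (by linarith)
      _ ≤ ∫⁻ z in ball y ρ, G z ^ (s - 1) ∂σ := lintegral_mono_set hball
  have hpow : (ENNReal.ofReal (ρ ^ ((n : ℝ) - α * s)))⁻¹ = ENNReal.ofReal (ρ ^ (α * s - n)) := by
    rw [← ENNReal.ofReal_inv_of_pos (by positivity), ← Real.rpow_neg hρ0.le, neg_sub]
  calc c ρ * wolffIntegrandHalf n α s σ x ρ
      = (ENNReal.ofReal (ρ ^ (α * s - n)) * (c ρ ^ (s - 1) * σ (ball x (ρ / 2)))) ^ (1 / (s - 1))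
          * ENNReal.ofReal ρ⁻¹ := by
        rw [wolffIntegrandHalf, ← mul_assoc, ENNReal.mul_div_rpow_one_div_sub_one hs, hpow]
    _ ≤ _ := by gcongr

lemma ENNReal.rpow_le_rpow_of_nonpos {x y : ℝ≥0∞} {z : ℝ} (hxy : x ≤ y) (hz : z ≤ 0) :
    y ^ z ≤ x ^ z := by
  simpa [ENNReal.rpow_neg] using ENNReal.inv_le_inv.2 (ENNReal.rpow_le_rpow hxy (neg_nonneg.2 hz))

open Nat in
theorem mul_measure_pow_le_Nop_iterate {n : ℕ} {α s : ℝ} (hs : 1 < s) (σ : Measure (En n))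
    {x : En n} {R : ℝ} {f : En n → ℝ≥0∞} {C : ℝ≥0∞} (hf : ∀ z ∈ ball x (R / 2), C ≤ f z)
    (k : ℕ) {r : ℝ} (hr : 0 < r) (hrR : r ≤ R) {y : En n} (hy : dist y x < r / 2) :
    C * (k ! : ℝ≥0∞)⁻¹ * volume.withDensity (wolffIntegrandHalf n α s σ x) (Ioo r R) ^ k
      ≤ (Nop n α s σ)^[k] f y := by
  set g := wolffIntegrandHalf n α s σ x
  set ν := volume.withDensity g
  induction k generalizing r y with
  | zero => simpa using hf y (mem_ball.2 (by linarith))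
  | succ k ih =>
    rw [Function.iterate_succ_apply']
    refine le_trans ?_ (setLIntegral_mul_wolffIntegrandHalf_le_Nop hs σ hr hy
      (c := fun ρ => C * (k ! : ℝ≥0∞)⁻¹ * ν (Ioo ρ R) ^ k)
      fun ρ hρ z hz => ih (hr.trans hρ.1) hρ.2.le (mem_ball.1 hz))
    have hmeas : Measurable fun ρ => ν (Ioo ρ R) ^ k :=
      (Antitone.measurable fun u v h => measure_mono (Ioo_subset_Ioo_left h)).pow_const k
    calc C * ((k + 1) ! : ℝ≥0∞)⁻¹ * ν (Ioo r R) ^ (k + 1)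
        = C * (k ! : ℝ≥0∞)⁻¹ * (ν (Ioo r R) ^ (k + 1) / (k + 1)) := by
          rw [factorial_succ, cast_mul, ENNReal.mul_inv (by simp) (by simp), div_eq_mul_inv]
          push_cast
          ring
      _ ≤ C * (k ! : ℝ≥0∞)⁻¹ * ∫⁻ ρ in Ioo r R, ν (Ioo ρ R) ^ k ∂ν := by
          gcongr
          exact ENNReal.div_le_of_le_mul' (pow_succ_le_mul_setLIntegral_measure_Ioo_pow ν r R k)
      _ = ∫⁻ ρ in Ioo r R, C * (k ! : ℝ≥0∞)⁻¹ * ν (Ioo ρ R) ^ k * g ρ := by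
          rw [setLIntegral_withDensity_eq_setLIntegral_mul _ (measurable_wolffIntegrandHalf ..)
            hmeas measurableSet_Ioo,
            ← lintegral_const_mul _ ((measurable_wolffIntegrandHalf ..).mul hmeas)]
          refine lintegral_congr fun ρ => ?_
          simp only [Pi.mul_apply]
          ring

theorem statement9_general (n : ℕ) (α s : ℝ) (hs : 1 < s)
    (hαs : α * s < n)
    (σ : Measure (En n))
    (x₀ x : En n) (hx : x ≠ x₀) (m : ℕ) :
    ENNReal.ofReal (((3:ℝ)/2) ^ ((α*s-(n:ℝ))/(s-1)))
        * ((m.factorial : ℝ≥0∞))⁻¹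
        * (ENNReal.ofReal ‖x - x₀‖) ^ ((α*s-(n:ℝ))/(s-1))
        * (∫⁻ r in Set.Ioo (0:ℝ) ‖x - x₀‖,
            (σ (Metric.ball x (r/2)) / ENNReal.ofReal (r ^ ((n:ℝ) - α*s))) ^ (1/(s-1))
              * ENNReal.ofReal r⁻¹) ^ m
      ≤ (Nop n α s σ)^[m]
          (fun y => (ENNReal.ofReal ‖y - x₀‖) ^ ((α*s-(n:ℝ))/(s-1))) x := by
  set β := (α * s - n) / (s - 1)
  have hβ : β ≤ 0 := div_nonpos_of_nonpos_of_nonneg (by linarith) (by linarith)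
  set R := ‖x - x₀‖
  have hR : 0 < R := norm_pos_iff.2 (sub_ne_zero.2 hx)
  set ν := volume.withDensity (wolffIntegrandHalf n α s σ x)
  set C := ENNReal.ofReal ((3 / 2 * R) ^ β)
  have hC : C = ENNReal.ofReal ((3 / 2) ^ β) * ENNReal.ofReal R ^ β := by
    rw [ENNReal.ofReal_rpow_of_pos hR, ← ENNReal.ofReal_mul (by positivity),
      ← Real.mul_rpow (by norm_num) hR.le]
  have hf : ∀ z ∈ ball x (R / 2), C ≤ ENNReal.ofReal ‖z - x₀‖ ^ β := fun z hz => by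
    have hz : ‖z - x₀‖ ≤ 3 / 2 * R := by
      rw [mem_ball, dist_eq_norm] at hz
      linarith [norm_sub_le_norm_sub_add_norm_sub z x x₀]
    rw [show C = ENNReal.ofReal (3 / 2 * R) ^ β from
      (ENNReal.ofReal_rpow_of_pos (by positivity)).symm]
    exact ENNReal.rpow_le_rpow_of_nonpos (ENNReal.ofReal_le_ofReal hz) hβ
  have hlim : Tendsto (fun r => C * (m.factorial : ℝ≥0∞)⁻¹ * ν (Ioo r R) ^ m) (𝓝[>] 0)
      (𝓝 (C * (m.factorial : ℝ≥0∞)⁻¹ * ν (Ioo 0 R) ^ m)) :=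
    ENNReal.Tendsto.const_mul (((ENNReal.continuous_pow m).tendsto _).comp
      (tendsto_measure_Ioo_nhdsGT ν 0 R))
      (Or.inr (ENNReal.mul_ne_top ENNReal.ofReal_ne_top (by simp [m.factorial_ne_zero])))
  calc _ = C * (m.factorial : ℝ≥0∞)⁻¹ * ν (Ioo 0 R) ^ m := by
        rw [withDensity_apply _ measurableSet_Ioo, hC]
        unfold wolffIntegrandHalf
        ring
    _ ≤ _ := le_of_tendsto hlim <| by
        filter_upwards [Ioo_mem_nhdsGT hR] with r hr
        exact mul_measure_pow_le_Nop_iterate hs σ hf m hr.1 hr.2.le (by simpa using half_pos hr.1)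

/-- Lemma `greenlowbd2`: with `f(y) = |y-x₀|^{(αs-n)/(s-1)}`, for every `m ≥ 1`
and `x ≠ x₀`:
`𝒩^m(f)(x) ≥ (3/2)^{(αs-n)/(s-1)} (1/m!) |x-x₀|^{(αs-n)/(s-1)}
  (∫_0^{|x-x₀|} (σ(B(x,r/2))/r^{n-αs})^{1/(s-1)} dr/r)^m`. -/
theorem statement9 (n : ℕ) (hn : 2 ≤ n) (α s : ℝ) (hs : 1 < s) (hα : 0 < α)
    (hαs : α * s < n)
    (σ : Measure (En n)) [IsLocallyFiniteMeasure σ]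
    (x₀ x : En n) (hx : x ≠ x₀) (m : ℕ) (hm : 1 ≤ m) :
    ENNReal.ofReal (((3:ℝ)/2) ^ ((α*s-(n:ℝ))/(s-1)))
        * ((m.factorial : ℝ≥0∞))⁻¹
        * (ENNReal.ofReal ‖x - x₀‖) ^ ((α*s-(n:ℝ))/(s-1))
        * (∫⁻ r in Set.Ioo (0:ℝ) ‖x - x₀‖,
            (σ (Metric.ball x (r/2)) / ENNReal.ofReal (r ^ ((n:ℝ) - α*s))) ^ (1/(s-1))
              * ENNReal.ofReal r⁻¹) ^ m
      ≤ (Nop n α s σ)^[m]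
          (fun y => (ENNReal.ofReal ‖y - x₀‖) ^ ((α*s-(n:ℝ))/(s-1))) x :=
  statement9_general n α s hs hαs σ x₀ x hx m
end
end

section
/- Let σ and ω be nonnegative locally finite Borel measures on ℝⁿ and let x, x₀ ∈ ℝⁿ. Then ∫_0^{|x−x₀|} ( r^{αs−n} ∫_{B(x,r/2)} ( ∫_r^∞ ( u^{αs−n} ω(B(y,u)) )^{1/(s−1)} du/u )^{s−1} dσ(y) )^{1/(s−1)} dr/r ≥ ∫_0^{|x−x₀|} ( σ(B(x,r/2))/r^{n−αs} )^{1/(s−1)} · ( ∫_r^∞ ( u^{αs−n} ω(B(x,u/2)) )^{1/(s−1)} du/u ) dr/r. -/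
open MeasureTheory Metric Set Filter
open scoped ENNReal NNReal Topology

noncomputable section

/-! Fix `r < ‖x - x₀‖`. For `y ∈ B(x, r/2)` and `t > r` we have `B(x, t/2) ⊆ B(y, t)`, so the
tail integral `C` at `x` (with half balls) is at most the tail integral at `y`. Hence
`σ(B(x,r/2)) C^{s-1} ≤ ∫_{B(x,r/2)} (tail at y)^{s-1} dσ(y)`, and taking `1/(s-1)`-th powers
after multiplying by `r^{αs-n}` gives the pointwise inequality of the integrands. -/

lemma ENNReal.div_ofReal_rpow {r : ℝ} (hr : 0 < r) (a : ℝ≥0∞) (b : ℝ) :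
    a / ENNReal.ofReal (r ^ b) = ENNReal.ofReal (r ^ (-b)) * a := by
  rw [ENNReal.div_eq_inv_mul, Real.rpow_neg hr.le,
    ENNReal.ofReal_inv_of_pos (Real.rpow_pos_of_pos hr b)]

lemma ENNReal.mul_rpow_one_div_mul {p : ℝ} (hp : 0 < p) (a b c : ℝ≥0∞) :
    (a * b) ^ (1 / p) * c = (a * (b * c ^ p)) ^ (1 / p) := by
  have hp' : 0 ≤ 1 / p := by positivity
  rw [ENNReal.mul_rpow_of_nonneg _ _ hp', ENNReal.mul_rpow_of_nonneg _ _ hp',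
    ENNReal.mul_rpow_of_nonneg _ _ hp', ← ENNReal.rpow_mul, mul_one_div, div_self hp.ne',
    ENNReal.rpow_one, mul_assoc]

lemma measure_mul_rpow_le_setLIntegral {X : Type*} [MeasurableSpace X] {μ : Measure X}
    {E : Set X} (hE : MeasurableSet E) {c : ℝ≥0∞} {f : X → ℝ≥0∞} (hcf : ∀ y ∈ E, c ≤ f y)
    {p : ℝ} (hp : 0 ≤ p) :
    μ E * c ^ p ≤ ∫⁻ y in E, f y ^ p ∂μ := by
  rw [mul_comm, ← setLIntegral_const]
  exact setLIntegral_mono' hE fun y hy => ENNReal.rpow_le_rpow (hcf y hy) hp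

lemma setLIntegral_Ioi_ball_half_le_ball {X : Type*} [PseudoMetricSpace X] [MeasurableSpace X]
    (ω : Measure X) {x y : X} {r : ℝ} (hy : y ∈ ball x (r / 2)) (w v : ℝ → ℝ≥0∞) {q : ℝ}
    (hq : 0 ≤ q) :
    ∫⁻ t in Ioi r, (w t * ω (ball x (t / 2))) ^ q * v t
      ≤ ∫⁻ t in Ioi r, (w t * ω (ball y t)) ^ q * v t := by
  refine setLIntegral_mono' measurableSet_Ioi fun t (ht : r < t) => ?_
  have hball : ball x (t / 2) ⊆ ball y t := by
    refine ball_subset_ball' ?_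
    rw [dist_comm]
    linarith [mem_ball.mp hy]
  gcongr

theorem statement10_general (n : ℕ) (α s : ℝ) (hs : 1 < s)
    (σ ω : Measure (En n))
    (x x₀ : En n) :
    (∫⁻ r in Set.Ioo (0:ℝ) ‖x - x₀‖,
        (σ (Metric.ball x (r/2)) / ENNReal.ofReal (r ^ ((n:ℝ) - α*s))) ^ (1/(s-1))
          * (∫⁻ t in Set.Ioi r,
              (ENNReal.ofReal (t ^ (α*s-(n:ℝ))) * ω (Metric.ball x (t/2))) ^ (1/(s-1))
                * ENNReal.ofReal t⁻¹)
          * ENNReal.ofReal r⁻¹)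
      ≤ ∫⁻ r in Set.Ioo (0:ℝ) ‖x - x₀‖,
          (ENNReal.ofReal (r ^ (α*s-(n:ℝ)))
              * ∫⁻ y in Metric.ball x (r/2),
                  (∫⁻ t in Set.Ioi r,
                    (ENNReal.ofReal (t ^ (α*s-(n:ℝ))) * ω (Metric.ball y t)) ^ (1/(s-1))
                      * ENNReal.ofReal t⁻¹) ^ (s-1) ∂σ) ^ (1/(s-1))
            * ENNReal.ofReal r⁻¹ := by
  have hs1 : (0:ℝ) < s - 1 := by linarith
  refine setLIntegral_mono' measurableSet_Ioo fun r ⟨hr0, _⟩ => ?_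
  gcongr ?_ * _
  rw [ENNReal.div_ofReal_rpow hr0, neg_sub, ENNReal.mul_rpow_one_div_mul hs1]
  gcongr
  exact measure_mul_rpow_le_setLIntegral measurableSet_ball
    (fun y hy => setLIntegral_Ioi_ball_half_le_ball ω hy _ _ (by positivity)) hs1.le

/-- the claim (5.10) in the paper: for nonnegative locally finite Borel
measures `σ, ω` and `x, x₀ ∈ ℝⁿ`,
`∫_0^{|x-x₀|} (r^{αs-n} ∫_{B(x,r/2)} (∫_r^∞ (u^{αs-n} ω(B(y,u)))^{1/(s-1)} du/u)^{s-1} dσ(y))^{1/(s-1)} dr/r`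
`≥ ∫_0^{|x-x₀|} (σ(B(x,r/2))/r^{n-αs})^{1/(s-1)} (∫_r^∞ (u^{αs-n} ω(B(x,u/2)))^{1/(s-1)} du/u) dr/r`. -/
theorem statement10 (n : ℕ) (hn : 2 ≤ n) (α s : ℝ) (hs : 1 < s) (hα : 0 < α)
    (hαs : α * s < n)
    (σ ω : Measure (En n)) [IsLocallyFiniteMeasure σ] [IsLocallyFiniteMeasure ω]
    (x x₀ : En n) :
    (∫⁻ r in Set.Ioo (0:ℝ) ‖x - x₀‖,
        (σ (Metric.ball x (r/2)) / ENNReal.ofReal (r ^ ((n:ℝ) - α*s))) ^ (1/(s-1))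
          * (∫⁻ t in Set.Ioi r,
              (ENNReal.ofReal (t ^ (α*s-(n:ℝ))) * ω (Metric.ball x (t/2))) ^ (1/(s-1))
                * ENNReal.ofReal t⁻¹)
          * ENNReal.ofReal r⁻¹)
      ≤ ∫⁻ r in Set.Ioo (0:ℝ) ‖x - x₀‖,
          (ENNReal.ofReal (r ^ (α*s-(n:ℝ)))
              * ∫⁻ y in Metric.ball x (r/2),
                  (∫⁻ t in Set.Ioi r,
                    (ENNReal.ofReal (t ^ (α*s-(n:ℝ))) * ω (Metric.ball y t)) ^ (1/(s-1))
                      * ENNReal.ofReal t⁻¹) ^ (s-1) ∂σ) ^ (1/(s-1))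
            * ENNReal.ofReal r⁻¹ :=
  statement10_general n α s hs σ ω x x₀
end
end

section
/- Let (λ_j)_{j≥1} be a sequence of nonnegative real numbers and let m ≥ 1 be an integer. Then ( Σ_{j=1}^∞ λ_j )^m ≤ m · Σ_{j=1}^∞ λ_j · ( Σ_{k=1}^j λ_k )^{m−1}, where both sides are interpreted in [0,∞]. -/
open scoped ENNReal

lemma aux_pow_add (a b : ℝ≥0∞) (m : ℕ) :
    (a + b) ^ (m + 1) ≤ a ^ (m + 1) + (m + 1 : ℝ≥0∞) * b * (a + b) ^ m := by
  induction m with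
  | zero => simp
  | succ m ih =>
    calc (a + b) ^ (m + 2) = (a + b) * (a + b) ^ (m + 1) := by ring
      _ ≤ (a + b) * (a ^ (m + 1) + (m + 1 : ℝ≥0∞) * b * (a + b) ^ m) := by gcongr
      _ = a * a ^ (m + 1) + b * a ^ (m + 1)
            + (m + 1 : ℝ≥0∞) * b * ((a + b) * (a + b) ^ m) := by ring
      _ ≤ a ^ (m + 2) + b * (a + b) ^ (m + 1)
            + (m + 1 : ℝ≥0∞) * b * (a + b) ^ (m + 1) := by
          have h1 : a * a ^ (m + 1) = a ^ (m + 2) := (pow_succ' a (m + 1)).symm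
          have h2 : (a + b) * (a + b) ^ m = (a + b) ^ (m + 1) := (pow_succ' (a + b) m).symm
          rw [h1, h2]
          gcongr
          exact le_self_add
      _ = a ^ (m + 1 + 1) + ((m + 1 : ℕ) + 1 : ℝ≥0∞) * b * (a + b) ^ (m + 1) := by
          push_cast; ring

lemma aux_partial (lam : ℕ → ℝ≥0∞) (m : ℕ) (n : ℕ) :
    (∑ j ∈ Finset.range n, lam j) ^ (m + 1)
      ≤ ((m : ℝ≥0∞) + 1) * ∑ j ∈ Finset.range n, lam j * (∑ k ∈ Finset.Iic j, lam k) ^ m := by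
  induction n with
  | zero => simp
  | succ n ih =>
    have hIic : Finset.Iic n = Finset.range (n + 1) := by
      ext x; simp [Nat.lt_succ_iff]
    rw [Finset.sum_range_succ, Finset.sum_range_succ, hIic, Finset.sum_range_succ]
    calc (∑ j ∈ Finset.range n, lam j + lam n) ^ (m + 1)
        ≤ (∑ j ∈ Finset.range n, lam j) ^ (m + 1)
            + (m + 1 : ℝ≥0∞) * lam n * (∑ j ∈ Finset.range n, lam j + lam n) ^ m :=
          aux_pow_add _ _ m
      _ ≤ ((m : ℝ≥0∞) + 1) * ∑ j ∈ Finset.range n, lam j * (∑ k ∈ Finset.Iic j, lam k) ^ m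
            + ((m : ℝ≥0∞) + 1) * (lam n * (∑ j ∈ Finset.range n, lam j + lam n) ^ m) := by
          refine add_le_add ih ?_
          rw [mul_assoc]
      _ = ((m : ℝ≥0∞) + 1) * (∑ j ∈ Finset.range n, lam j * (∑ k ∈ Finset.Iic j, lam k) ^ m
            + lam n * (∑ j ∈ Finset.range n, lam j + lam n) ^ m) := by ring

/-- summation by parts inequality (4.14): for a nonnegative sequence
`(λ_j)` and `m ≥ 1`, `(Σ_j λ_j)^m ≤ m Σ_j λ_j (Σ_{k ≤ j} λ_k)^{m-1}` in `[0,∞]`. -/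
theorem statement17 (lam : ℕ → ℝ≥0∞) (m : ℕ) (hm : 1 ≤ m) :
    (∑' j : ℕ, lam j) ^ m
      ≤ (m : ℝ≥0∞) * ∑' j : ℕ, lam j * (∑ k ∈ Finset.Iic j, lam k) ^ (m - 1) := by
  obtain ⟨m', rfl⟩ : ∃ m', m = m' + 1 := ⟨m - 1, (Nat.succ_pred_eq_of_pos hm).symm⟩
  simp only [Nat.add_sub_cancel]
  have htend : Filter.Tendsto (fun n => (∑ j ∈ Finset.range n, lam j) ^ (m' + 1))
      Filter.atTop (nhds ((∑' j : ℕ, lam j) ^ (m' + 1))) :=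
    ((ENNReal.continuous_pow (m' + 1)).tendsto _).comp (ENNReal.tendsto_nat_tsum lam)
  refine le_of_tendsto' htend fun n => ?_
  calc (∑ j ∈ Finset.range n, lam j) ^ (m' + 1)
      ≤ ((m' : ℝ≥0∞) + 1) * ∑ j ∈ Finset.range n, lam j * (∑ k ∈ Finset.Iic j, lam k) ^ m' :=
        aux_partial lam m' n
    _ ≤ ((m' : ℝ≥0∞) + 1) * ∑' j : ℕ, lam j * (∑ k ∈ Finset.Iic j, lam k) ^ m' := by
        gcongr
        exact ENNReal.sum_le_tsum _
    _ = ((m' + 1 : ℕ) : ℝ≥0∞) * ∑' j : ℕ, lam j * (∑ k ∈ Finset.Iic j, lam k) ^ m' := by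
        push_cast; ring
end

section
/- Let (λ_j)_{j≥0} be a sequence of real numbers with 0 ≤ λ_j ≤ 1 for all j. Then Σ_{j=0}^∞ λ_j · exp( Σ_{k=j}^∞ λ_k ) ≤ 2 · exp( Σ_{j=0}^∞ λ_j ), where both sides are interpreted in [0,∞]. -/
/-!
Write `T j = ∑_{k ≥ j} λ_k`, so that `T j = λ_j + T (j+1)`. For `0 ≤ x ≤ 1` one has
`x e^x ≤ 2 (e^x - 1)`, hence `λ_j e^{T j} ≤ 2 (e^{T j} - e^{T (j+1)})`: the series telescopes
and its partial sums stay below `2 e^{T 0}`.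
-/

open scoped ENNReal

theorem Real.mul_exp_le_two_mul_exp_sub_one {x : ℝ} (h0 : 0 ≤ x) (h1 : x ≤ 1) :
    x * Real.exp x ≤ 2 * (Real.exp x - 1) := by
  -- `(2 - x) e^x ≥ (2 - x) (1 + x + x²/2) = 2 + x (1 - x²/2) ≥ 2`
  nlinarith [Real.quadratic_le_exp_of_nonneg h0, mul_nonneg h0 (sub_nonneg.2 h1),
    mul_nonneg (mul_nonneg h0 h0) (sub_nonneg.2 h1)]

theorem eexp_top : eexp ∞ = ∞ := if_pos rfl

theorem eexp_coe (x : NNReal) : eexp x = ENNReal.ofReal (Real.exp x) := by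
  rw [eexp, if_neg ENNReal.coe_ne_top, ENNReal.coe_toReal]

theorem mul_eexp_add_add_two_mul_eexp_le {a t : ℝ≥0∞} (ha : a ≤ 1) :
    a * eexp (a + t) + 2 * eexp t ≤ 2 * eexp (a + t) := by
  rcases eq_or_ne t ∞ with rfl | ht
  · simp [eexp_top]
  lift t to NNReal using ht
  lift a to NNReal using ne_top_of_le_ne_top ENNReal.one_ne_top ha
  have ha' : (a : ℝ) ≤ 1 := by exact_mod_cast ha
  have key := Real.mul_exp_le_two_mul_exp_sub_one a.coe_nonneg ha'
  rw [← ENNReal.coe_add, eexp_coe, eexp_coe, ← ENNReal.ofReal_coe_nnreal (p := a),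
    ← ENNReal.ofReal_ofNat 2, ← ENNReal.ofReal_mul a.coe_nonneg,
    ← ENNReal.ofReal_mul zero_le_two, ← ENNReal.ofReal_mul zero_le_two,
    ← ENNReal.ofReal_add (by positivity) (by positivity)]
  refine ENNReal.ofReal_le_ofReal ?_
  push_cast
  rw [Real.exp_add]
  nlinarith [Real.exp_pos (t : ℝ)]

section TailSum

variable (a : ℕ → ℝ≥0∞)

noncomputable def tailSum (j : ℕ) : ℝ≥0∞ := ∑' k, if j ≤ k then a k else 0

theorem tailSum_zero : tailSum a 0 = ∑' k, a k := by
  simp [tailSum]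

theorem tailSum_eq_add_tailSum_succ (j : ℕ) : tailSum a j = a j + tailSum a (j + 1) := by
  rw [tailSum, ENNReal.tsum_eq_add_tsum_ite j, if_pos le_rfl, tailSum]
  congr 1
  refine tsum_congr fun k => ?_
  split_ifs <;> first | rfl | omega

variable {a}

theorem sum_range_mul_eexp_tailSum_add_le (ha : ∀ j, a j ≤ 1) (N : ℕ) :
    ∑ j ∈ Finset.range N, a j * eexp (tailSum a j) + 2 * eexp (tailSum a N)
      ≤ 2 * eexp (tailSum a 0) := by
  induction N with
  | zero => simp
  | succ n ih =>
    calc ∑ j ∈ Finset.range (n + 1), a j * eexp (tailSum a j) + 2 * eexp (tailSum a (n + 1))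
        = ∑ j ∈ Finset.range n, a j * eexp (tailSum a j)
            + (a n * eexp (a n + tailSum a (n + 1)) + 2 * eexp (tailSum a (n + 1))) := by
          rw [Finset.sum_range_succ, add_assoc, ← tailSum_eq_add_tailSum_succ]
      _ ≤ ∑ j ∈ Finset.range n, a j * eexp (tailSum a j) + 2 * eexp (tailSum a n) := by
          rw [tailSum_eq_add_tailSum_succ a n]
          gcongr
          exact mul_eexp_add_add_two_mul_eexp_le (ha n)
      _ ≤ 2 * eexp (tailSum a 0) := ih

theorem tsum_mul_eexp_tailSum_le (ha : ∀ j, a j ≤ 1) :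
    ∑' j, a j * eexp (tailSum a j) ≤ 2 * eexp (∑' j, a j) := by
  rw [ENNReal.tsum_eq_iSup_nat, ← tailSum_zero]
  exact iSup_le fun N =>
    le_self_add.trans (sum_range_mul_eexp_tailSum_add_le ha N)

end TailSum

/-- summation by parts estimate (6.14): if `0 ≤ λ_j ≤ 1` for all `j`, then
`Σ_{j=0}^∞ λ_j exp(Σ_{k=j}^∞ λ_k) ≤ 2 exp(Σ_{j=0}^∞ λ_j)` in `[0,∞]`. -/
theorem statement18 (lam : ℕ → ℝ) (hlam : ∀ j, 0 ≤ lam j ∧ lam j ≤ 1) :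
    (∑' j : ℕ, ENNReal.ofReal (lam j)
        * eexp (∑' k : ℕ, if j ≤ k then ENNReal.ofReal (lam k) else 0))
      ≤ 2 * eexp (∑' j : ℕ, ENNReal.ofReal (lam j)) :=
  tsum_mul_eexp_tailSum_le fun j => ENNReal.ofReal_le_one.2 (hlam j).2
end

section
/- Suppose s ≥ 2 and σ satisfies σ(B(x,r)) ≤ C·r^{n−αs} for all x ∈ ℝⁿ and r > 0, where C > 0. For R > 0 define b_R = R^{−n} ∫_{B(0,R)} ( ∫_0^1 (σ(B(x,r))/r^{n−αs})^{1/(s−1)} dr/r ) dx, the outer integral being with respect to Lebesgue measure. Then b_R → 0 as R → ∞. -/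
/-! With `θ = 1/(s-1) ≤ 1`, the map `t ↦ t^θ` is concave, so for each fixed `r` Hölder's
inequality on `B(0,R)` and Fubini give
`∫_{B(0,R)} (σ(B(x,r))/r^{n-αs})^θ dx ≤ |B(0,R)|^{1-θ} (|B(0,r)| σ(B(0,2R)) / r^{n-αs})^θ`.
The growth bound `σ(B(0,2R)) ≤ C (2R)^{n-αs}` turns the right-hand side into `≲ R^{n-αsθ} r^{αsθ}`,
and integrating against `dr/r` over `(0,1)` yields `b_R ≲ R^{-αsθ} → 0`. -/

open MeasureTheory Metric Set Filter
open scoped ENNReal NNReal Topology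

noncomputable section

open Module

theorem lintegral_rpow_le_measure_univ_rpow_mul {α : Type*} [MeasurableSpace α] {μ : Measure α}
    {f : α → ℝ≥0∞} (hf : AEMeasurable f μ) {θ : ℝ} (hθ0 : 0 < θ) (hθ1 : θ ≤ 1) :
    ∫⁻ a, f a ^ θ ∂μ ≤ μ univ ^ (1 - θ) * (∫⁻ a, f a ∂μ) ^ θ := by
  have h := eLpNorm'_le_eLpNorm'_mul_rpow_measure_univ hθ0 hθ1 hf.aestronglyMeasurable
  simp only [eLpNorm'_eq_lintegral_enorm, enorm_eq_self, ENNReal.rpow_one, div_one,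
    one_div] at h
  refine (ENNReal.rpow_inv_le_iff hθ0).mp h |>.trans_eq ?_
  rw [ENNReal.mul_rpow_of_nonneg _ _ hθ0.le, ← ENNReal.rpow_mul, mul_comm]
  congr 2
  field_simp

theorem measurable_measure_ball {E : Type*} [PseudoMetricSpace E] [MeasurableSpace E]
    [OpensMeasurableSpace E] [SecondCountableTopology E] (σ : Measure E) [SFinite σ] :
    Measurable fun p : E × ℝ => σ (ball p.1 p.2) := by
  have hopen : IsOpen {q : (E × ℝ) × E | dist q.2 q.1.1 < q.1.2} :=
    isOpen_lt (by fun_prop) (by fun_prop)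
  exact measurable_measure_prodMk_left hopen.measurableSet

theorem lintegral_measure_ball_comm {E : Type*} [PseudoMetricSpace E] [MeasurableSpace E]
    [OpensMeasurableSpace E] [SecondCountableTopology E] (μ σ : Measure E) [SFinite μ]
    [SFinite σ] (r : ℝ) :
    ∫⁻ x, σ (ball x r) ∂μ = ∫⁻ y, μ (ball y r) ∂σ := by
  have hS : MeasurableSet {q : E × E | dist q.1 q.2 < r} :=
    (isOpen_lt (by fun_prop) (by fun_prop)).measurableSet
  calc ∫⁻ x, σ (ball x r) ∂μ = μ.prod σ {q : E × E | dist q.1 q.2 < r} := by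
        rw [Measure.prod_apply hS]; simp only [preimage_ofPred_eq, ball, dist_comm]
    _ = ∫⁻ y, μ (ball y r) ∂σ := by
        rw [Measure.prod_apply_symm hS]; simp only [preimage_ofPred_eq, ball]

theorem setLIntegral_measure_ball_le {E : Type*} [NormedAddCommGroup E] [MeasurableSpace E]
    [BorelSpace E] [SecondCountableTopology E] [LocallyCompactSpace E] (μ : Measure E)
    [μ.IsAddHaarMeasure]
    (σ : Measure E) [SFinite σ] (c : E) (R r : ℝ) :
    ∫⁻ x in ball c R, σ (ball x r) ∂μ ≤ μ (ball 0 r) * σ (ball c (R + r)) := by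
  set σ' := σ.restrict (ball c (R + r))
  have hσ' : ∀ x ∈ ball c R, σ (ball x r) = σ' (ball x r) := fun x hx => by
    rw [Measure.restrict_apply measurableSet_ball, inter_eq_left.mpr]
    exact ball_subset_ball' (by rw [mem_ball] at hx; linarith)
  calc ∫⁻ x in ball c R, σ (ball x r) ∂μ = ∫⁻ x in ball c R, σ' (ball x r) ∂μ :=
        setLIntegral_congr_fun measurableSet_ball hσ'
    _ ≤ ∫⁻ x, σ' (ball x r) ∂μ := setLIntegral_le_lintegral _ _
    _ = ∫⁻ _, μ (ball 0 r) ∂σ' := by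
        rw [lintegral_measure_ball_comm]
        simp_rw [Measure.addHaar_ball_center]
    _ = μ (ball 0 r) * σ (ball c (R + r)) := by
        rw [lintegral_const, Measure.restrict_apply_univ]

theorem rpow_one_sub_mul_rpow_eq_mul_rpow_mul_rpow {d p C θ r R : ℝ} (hr : 0 < r) (hR : 0 < R) (hC : 0 ≤ C) :
    (R ^ d) ^ (1 - θ) * (r ^ d * (C * (2 * R) ^ (d - p)) / r ^ (d - p)) ^ θ
      = (C * 2 ^ (d - p)) ^ θ * R ^ (d - p * θ) * r ^ (p * θ) := by
  have hsplit : r ^ d * (C * (2 * R) ^ (d - p)) / r ^ (d - p)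
      = (C * 2 ^ (d - p)) * R ^ (d - p) * r ^ p := by
    rw [Real.mul_rpow zero_le_two hR.le, show r ^ p = r ^ d / r ^ (d - p) by
      rw [← Real.rpow_sub hr]; ring_nf]
    ring
  have hR_exp : R ^ (d - p * θ) = R ^ (d * (1 - θ)) * R ^ ((d - p) * θ) := by
    rw [← Real.rpow_add hR]; ring_nf
  rw [hsplit, Real.mul_rpow (by positivity) (by positivity),
    Real.mul_rpow (by positivity) (by positivity), ← Real.rpow_mul hR.le, ← Real.rpow_mul hR.le,
    ← Real.rpow_mul hr.le, hR_exp]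
  ring

theorem setLIntegral_rpow_measure_ball_div_le {E : Type*} [NormedAddCommGroup E]
    [NormedSpace ℝ E] [FiniteDimensional ℝ E] [Nontrivial E] [MeasurableSpace E] [BorelSpace E]
    (μ : Measure E) [μ.IsAddHaarMeasure] (σ : Measure E) [SFinite σ] {p C θ : ℝ} (hC : 0 ≤ C)
    (hθ0 : 0 < θ) (hθ1 : θ ≤ 1)
    (hball : ∀ x r, 0 < r → σ (ball x r) ≤ ENNReal.ofReal (C * r ^ ((finrank ℝ E : ℝ) - p)))
    (c : E) {r R : ℝ} (hr : 0 < r) (hrR : r ≤ R) :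
    ∫⁻ x in ball c R, (σ (ball x r) / ENNReal.ofReal (r ^ ((finrank ℝ E : ℝ) - p))) ^ θ ∂μ
      ≤ μ (ball 0 1) * ENNReal.ofReal
          ((C * 2 ^ ((finrank ℝ E : ℝ) - p)) ^ θ * R ^ ((finrank ℝ E : ℝ) - p * θ) * r ^ (p * θ)) := by
  set d : ℝ := (finrank ℝ E : ℝ)
  set v := μ (ball 0 1)
  have hR : 0 < R := hr.trans_le hrR
  have hmeas : Measurable fun x => σ (ball x r) :=
    (measurable_measure_ball σ).comp (measurable_id.prodMk measurable_const)
  have hvolume : ∀ (y : E) {t : ℝ}, 0 ≤ t → μ (ball y t) = ENNReal.ofReal (t ^ d) * v :=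
    fun y t ht => by rw [Measure.addHaar_ball μ y ht, Real.rpow_natCast]
  have hmass : ∫⁻ x in ball c R, σ (ball x r) ∂μ
      ≤ ENNReal.ofReal (r ^ d) * v * ENNReal.ofReal (C * (2 * R) ^ (d - p)) :=
    calc ∫⁻ x in ball c R, σ (ball x r) ∂μ ≤ μ (ball 0 r) * σ (ball c (R + r)) :=
          setLIntegral_measure_ball_le μ σ c R r
      _ ≤ μ (ball 0 r) * σ (ball c (2 * R)) := by gcongr; linarith
      _ ≤ ENNReal.ofReal (r ^ d) * v * ENNReal.ofReal (C * (2 * R) ^ (d - p)) := by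
          rw [hvolume 0 hr.le]
          gcongr
          exact hball c _ (by positivity)
  have hv : v ^ (1 - θ) * v ^ θ = v := by
    rw [← ENNReal.rpow_add _ _ (measure_ball_pos μ 0 one_pos).ne' measure_ball_lt_top.ne,
      sub_add_cancel, ENNReal.rpow_one]
  calc ∫⁻ x in ball c R, (σ (ball x r) / ENNReal.ofReal (r ^ (d - p))) ^ θ ∂μ
      ≤ μ.restrict (ball c R) univ ^ (1 - θ)
          * (∫⁻ x in ball c R, σ (ball x r) / ENNReal.ofReal (r ^ (d - p)) ∂μ) ^ θ :=
        lintegral_rpow_le_measure_univ_rpow_mul (hmeas.div_const _).aemeasurable hθ0 hθ1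
    _ = (ENNReal.ofReal (R ^ d) * v) ^ (1 - θ)
          * ((∫⁻ x in ball c R, σ (ball x r) ∂μ) / ENNReal.ofReal (r ^ (d - p))) ^ θ := by
        simp_rw [Measure.restrict_apply_univ, hvolume c hR.le, div_eq_mul_inv,
          lintegral_mul_const _ hmeas]
    _ ≤ (ENNReal.ofReal (R ^ d) * v) ^ (1 - θ)
          * (ENNReal.ofReal (r ^ d) * v * ENNReal.ofReal (C * (2 * R) ^ (d - p))
            / ENNReal.ofReal (r ^ (d - p))) ^ θ := by
        gcongr
    _ = v * ENNReal.ofReal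
          ((R ^ d) ^ (1 - θ) * (r ^ d * (C * (2 * R) ^ (d - p)) / r ^ (d - p)) ^ θ) := by
        rw [mul_right_comm, ← ENNReal.ofReal_mul (by positivity), div_eq_mul_inv,
          mul_right_comm, ← div_eq_mul_inv, ← ENNReal.ofReal_div_of_pos (by positivity),
          ENNReal.mul_rpow_of_nonneg _ _ (by linarith), ENNReal.mul_rpow_of_nonneg _ _ hθ0.le,
          ENNReal.ofReal_rpow_of_nonneg (by positivity) (by linarith),
          ENNReal.ofReal_rpow_of_nonneg (by positivity) hθ0.le,
          ENNReal.ofReal_mul (by positivity)]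
        conv_rhs => rw [← hv]
        ring
    _ = _ := by rw [rpow_one_sub_mul_rpow_eq_mul_rpow_mul_rpow hr hR hC]

theorem setLIntegral_truncated_wolff_le {E : Type*} [NormedAddCommGroup E]
    [NormedSpace ℝ E] [FiniteDimensional ℝ E] [Nontrivial E] [MeasurableSpace E] [BorelSpace E]
    (μ : Measure E) [μ.IsAddHaarMeasure] (σ : Measure E) [SFinite σ] {p C θ : ℝ} (hC : 0 ≤ C)
    (hθ0 : 0 < θ) (hθ1 : θ ≤ 1)
    (hball : ∀ x r, 0 < r → σ (ball x r) ≤ ENNReal.ofReal (C * r ^ ((finrank ℝ E : ℝ) - p)))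
    (c : E) {ρ R : ℝ} (hρR : ρ ≤ R) :
    ∫⁻ x in ball c R, (∫⁻ r in Ioo (0:ℝ) ρ,
        (σ (ball x r) / ENNReal.ofReal (r ^ ((finrank ℝ E : ℝ) - p))) ^ θ * ENNReal.ofReal r⁻¹) ∂μ
      ≤ μ (ball 0 1) * ENNReal.ofReal ((C * 2 ^ ((finrank ℝ E : ℝ) - p)) ^ θ)
          * (∫⁻ r in Ioo (0:ℝ) ρ, ENNReal.ofReal (r ^ (p * θ - 1)))
          * ENNReal.ofReal (R ^ ((finrank ℝ E : ℝ) - p * θ)) := by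
  set d : ℝ := (finrank ℝ E : ℝ)
  set K := μ (ball 0 1) * ENNReal.ofReal ((C * 2 ^ (d - p)) ^ θ) * ENNReal.ofReal (R ^ (d - p * θ))
  have hmeas : Measurable fun q : E × ℝ =>
      (σ (ball q.1 q.2) / ENNReal.ofReal (q.2 ^ (d - p))) ^ θ * ENNReal.ofReal q.2⁻¹ := by
    refine (((measurable_measure_ball σ).div ?_).pow_const θ).mul ?_ <;> fun_prop
  have hslice : ∀ r ∈ Ioo (0:ℝ) ρ, ∫⁻ x in ball c R,
      (σ (ball x r) / ENNReal.ofReal (r ^ (d - p))) ^ θ * ENNReal.ofReal r⁻¹ ∂μ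
        ≤ K * ENNReal.ofReal (r ^ (p * θ - 1)) := fun r ⟨hr0, hrρ⟩ => by
    have hR : 0 < R := hr0.trans (hrρ.trans_le hρR)
    have hr_exp : r ^ (p * θ) * r⁻¹ = r ^ (p * θ - 1) := by
      rw [Real.rpow_sub_one hr0.ne', div_eq_mul_inv]
    rw [lintegral_mul_const' _ _ ENNReal.ofReal_ne_top]
    calc (∫⁻ x in ball c R, (σ (ball x r) / ENNReal.ofReal (r ^ (d - p))) ^ θ ∂μ)
          * ENNReal.ofReal r⁻¹
        ≤ μ (ball 0 1) * ENNReal.ofReal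
            ((C * 2 ^ (d - p)) ^ θ * R ^ (d - p * θ) * r ^ (p * θ)) * ENNReal.ofReal r⁻¹ := by
          gcongr
          exact setLIntegral_rpow_measure_ball_div_le μ σ hC hθ0 hθ1 hball c hr0
            (hrρ.le.trans hρR)
      _ = K * ENNReal.ofReal (r ^ (p * θ - 1)) := by
          rw [mul_assoc, ← ENNReal.ofReal_mul (by positivity), mul_assoc, hr_exp,
            ENNReal.ofReal_mul (by positivity), ENNReal.ofReal_mul (by positivity)]
          ring
  calc ∫⁻ x in ball c R, (∫⁻ r in Ioo (0:ℝ) ρ,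
        (σ (ball x r) / ENNReal.ofReal (r ^ (d - p))) ^ θ * ENNReal.ofReal r⁻¹) ∂μ
      = ∫⁻ r in Ioo (0:ℝ) ρ, ∫⁻ x in ball c R,
        (σ (ball x r) / ENNReal.ofReal (r ^ (d - p))) ^ θ * ENNReal.ofReal r⁻¹ ∂μ :=
        lintegral_lintegral_swap hmeas.aemeasurable
    _ ≤ ∫⁻ r in Ioo (0:ℝ) ρ, K * ENNReal.ofReal (r ^ (p * θ - 1)) :=
        setLIntegral_mono' measurableSet_Ioo hslice
    _ = _ := by rw [lintegral_const_mul _ (by fun_prop)]; ring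

theorem tendsto_div_rpow_of_le_mul_rpow {f : ℝ → ℝ≥0∞} {A : ℝ≥0∞} {d q : ℝ} (hq : 0 < q)
    (hf : ∀ᶠ R in atTop, f R ≤ A * ENNReal.ofReal (R ^ (d - q))) (hA : A ≠ ⊤) :
    Tendsto (fun R => f R / ENNReal.ofReal (R ^ d)) atTop (𝓝 0) := by
  have hlim : Tendsto (fun R : ℝ => A * ENNReal.ofReal (R ^ (-q))) atTop (𝓝 0) := by
    have h := ENNReal.tendsto_ofReal (tendsto_rpow_neg_atTop hq)
    rw [ENNReal.ofReal_zero] at h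
    simpa using ENNReal.Tendsto.const_mul h (Or.inr hA)
  refine tendsto_of_tendsto_of_tendsto_of_le_of_le' tendsto_const_nhds hlim
    (Eventually.of_forall fun R => zero_le) ?_
  filter_upwards [hf, eventually_gt_atTop 0] with R hfR hR
  calc f R / ENNReal.ofReal (R ^ d) ≤ A * ENNReal.ofReal (R ^ (d - q)) / ENNReal.ofReal (R ^ d) :=
        ENNReal.div_le_div_right hfR _
    _ = A * ENNReal.ofReal (R ^ (-q)) := by
        rw [sub_eq_neg_add, Real.rpow_add hR, ENNReal.ofReal_mul (by positivity), ← mul_assoc,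
          mul_div_assoc, ENNReal.div_self (by simp; positivity) ENNReal.ofReal_ne_top, mul_one]

theorem statement19_general (n : ℕ) (α s : ℝ) (hs2 : 2 ≤ s) (hα : 0 < α)
    (hαs : α * s < n) (C : ℝ) (hC : 0 < C)
    (σ : Measure (En n)) [IsLocallyFiniteMeasure σ]
    (hball : ∀ (x : En n) (r : ℝ), 0 < r →
      σ (Metric.ball x r) ≤ ENNReal.ofReal (C * r ^ ((n:ℝ) - α * s))) :
    Filter.Tendsto
      (fun R : ℝ =>
        (∫⁻ x in Metric.ball (0 : En n) R, wolffT n α s σ 1 x ∂volume)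
          / ENNReal.ofReal (R ^ (n:ℝ)))
      Filter.atTop (nhds 0) := by
  have hθ0 : 0 < 1 / (s - 1) := one_div_pos.mpr (by linarith)
  have hθ1 : 1 / (s - 1) ≤ 1 := (div_le_one (by linarith)).mpr (by linarith)
  have hq : 0 < α * s * (1 / (s - 1)) := mul_pos (mul_pos hα (by linarith)) hθ0
  have : Nonempty (Fin n) := ⟨⟨0, by exact_mod_cast (mul_pos hα (by linarith)).trans hαs⟩⟩
  have hJ : ∫⁻ r in Ioo (0:ℝ) 1, ENNReal.ofReal (r ^ (α * s * (1 / (s - 1)) - 1)) ≠ ∞ :=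
    ((intervalIntegral.integrableOn_Ioo_rpow_iff one_pos).mpr (by linarith)).lintegral_lt_top.ne
  have hd : (finrank ℝ (En n) : ℝ) = n := by rw [finrank_euclideanSpace_fin]
  rw [← hd] at hball
  apply tendsto_div_rpow_of_le_mul_rpow hq
  · filter_upwards [eventually_ge_atTop 1] with R hR
    have := setLIntegral_truncated_wolff_le volume σ hC.le hθ0 hθ1 hball 0 hR
    rw [hd] at this
    exact this
  · exact ENNReal.mul_ne_top (by finiteness) hJ

/-- if `s ≥ 2` and `σ(B(x,r)) ≤ C r^{n-αs}` for all balls, then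
`b_R = R^{-n} ∫_{B(0,R)} (∫_0^1 (σ(B(x,r))/r^{n-αs})^{1/(s-1)} dr/r) dx → 0` as `R → ∞`. -/
theorem statement19 (n : ℕ) (hn : 2 ≤ n) (α s : ℝ) (hs : 1 < s) (hs2 : 2 ≤ s) (hα : 0 < α)
    (hαs : α * s < n) (C : ℝ) (hC : 0 < C)
    (σ : Measure (En n)) [IsLocallyFiniteMeasure σ]
    (hball : ∀ (x : En n) (r : ℝ), 0 < r →
      σ (Metric.ball x r) ≤ ENNReal.ofReal (C * r ^ ((n:ℝ) - α * s))) :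
    Filter.Tendsto
      (fun R : ℝ =>
        (∫⁻ x in Metric.ball (0 : En n) R, wolffT n α s σ 1 x ∂volume)
          / ENNReal.ofReal (R ^ (n:ℝ)))
      Filter.atTop (nhds 0) :=
  statement19_general n α s hs2 hα hαs C hC σ hball
end
end
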